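/- arXiv:2310.00958 — 12 statements merged into one kernel-verified Lean document; each statement's English description precedes it below -/
import Mathlib

section
/- Every monotone submodular-over-signals (SOS) valuation function is self-bounding: if v is monotone and SOS, then for every signal profile s, ∑_{i=1}^n (v(s) − low_i(v,s)) ≤ v(s). -/
open MeasureTheory Finset

/-- Lower estimate of valuation `v` with respect to bidder `i` at profile `s`:
`low_i(v,s) = inf_{o_i ∈ S_i} v(o_i, s_{-i})`. -/
noncomputable def lowEst {n : ℕ} {S : Fin n → Type*} [∀ i, Nonempty (S i)]
    (v : ((i : Fin n) → S i) → ℝ) (s : (i : Fin n) → S i) (i : Fin n) : ℝ :=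
  sInf (Set.range fun o : S i => v (Function.update s i o))

/-- Every monotone submodular-over-signals (SOS) valuation function is self-bounding. -/
theorem monotone_sos_self_bounding {n : ℕ} {S : Fin n → Type*}
    [∀ i, Nonempty (S i)] [∀ i, LinearOrder (S i)]
    (v : ((i : Fin n) → S i) → ℝ)
    (hnonneg : ∀ s, 0 ≤ v s)
    (hmono : ∀ s t : (i : Fin n) → S i, (∀ i, t i ≤ s i) → v t ≤ v s)
    (hsos : ∀ (i : Fin n) (s t : (i : Fin n) → S i), (∀ j, t j ≤ s j) →
      v s - v (Function.update s i (t i)) ≤ v (Function.update t i (s i)) - v t)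
    (s : (i : Fin n) → S i) :
    ∑ i : Fin n, (v s - lowEst v s i) ≤ v s := by
  rcases Nat.eq_zero_or_pos n with hn | hn
  · subst hn; simp [hnonneg]
  refine le_of_forall_pos_le_add fun ε hε => ?_
  have hεn : 0 < ε / n := div_pos hε (by exact_mod_cast hn)
  -- choose near-optimal lower deviations
  have hex : ∀ i : Fin n, ∃ o : S i, o ≤ s i ∧
      v (Function.update s i o) < lowEst v s i + ε / n := by
    intro i
    obtain ⟨x, hx, hxlt⟩ := Real.lt_sInf_add_pos
      (Set.range_nonempty (fun o : S i => v (Function.update s i o))) hεn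
    obtain ⟨o', rfl⟩ := hx
    refine ⟨min o' (s i), min_le_right _ _, lt_of_le_of_lt ?_ hxlt⟩
    apply hmono
    intro j
    by_cases hj : j = i
    · subst hj; simp [min_le_left]
    · simp [Function.update_of_ne hj]
  choose o ho1 ho2 using hex
  -- hybrid profiles
  set h : ℕ → ((i : Fin n) → S i) := fun k j => if (j : ℕ) < k then o j else s j with hh
  have hle : ∀ k j, h k j ≤ s j := by
    intro k j; by_cases hj : (j : ℕ) < k <;> simp [hh, hj, ho1]
  have h0 : h 0 = s := by funext j; simp [hh]
  have hstep : ∀ i : Fin n,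
      v s - v (Function.update s i (o i)) ≤ v (h i) - v (h (i + 1)) := by
    intro i
    have hkey := hsos i s (h (i + 1)) (hle _)
    have h1 : h (↑i + 1) i = o i := by simp [hh]
    have h2 : Function.update (h (↑i + 1)) i (s i) = h i := by
      funext j
      by_cases hj : j = i
      · subst hj; simp [hh]
      · have hji : (j : ℕ) ≠ (i : ℕ) := fun hc => hj (Fin.ext hc)
        rw [Function.update_of_ne hj]
        simp only [hh]
        by_cases hlt : (j : ℕ) < i
        · simp [hlt, Nat.lt_succ_of_lt hlt]
        · have : ¬ (j : ℕ) < (i : ℕ) + 1 := by omega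
          simp [hlt, this]
    rw [h1, h2] at hkey
    exact hkey
  have htel : ∑ i : Fin n, (v (h i) - v (h (i + 1))) = v s - v (h n) := by
    rw [Fin.sum_univ_eq_sum_range (fun k => v (h k) - v (h (k + 1)))]
    rw [Finset.sum_range_sub' (fun k => v (h k))]
    rw [h0]
  calc ∑ i : Fin n, (v s - lowEst v s i)
      ≤ ∑ i : Fin n, (v s - v (Function.update s i (o i)) + ε / n) := by
        apply Finset.sum_le_sum
        intro i _
        have := ho2 i
        linarith
    _ = ∑ i : Fin n, (v s - v (Function.update s i (o i))) + ε := by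
        rw [Finset.sum_add_distrib, Finset.sum_const, Finset.card_univ, Fintype.card_fin]
        have : (n : ℝ) * (ε / n) = ε := by
          field_simp
        simp [nsmul_eq_mul, this]
    _ ≤ ∑ i : Fin n, (v (h i) - v (h (i + 1))) + ε := by
        have := Finset.sum_le_sum (fun i (_ : i ∈ Finset.univ) => hstep i)
        linarith
    _ = v s - v (h n) + ε := by rw [htel]
    _ ≤ v s + ε := by have := hnonneg (h n); linarith
end

section
/- Every (possibly non-monotone) submodular-over-signals (SOS) valuation function is 2-self-bounding: if v is SOS, then for every signal profile s, ∑_{i=1}^n (v(s) − low_i(v,s)) ≤ 2·v(s). -/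
open MeasureTheory Finset

lemma sos_telescope {n : ℕ} {S : Fin n → Type*} [∀ i, LinearOrder (S i)]
    (v : ((i : Fin n) → S i) → ℝ)
    (hsos : ∀ (i : Fin n) (s t : (i : Fin n) → S i), (∀ j, t j ≤ s j) →
      v s - v (Function.update s i (t i)) ≤ v (Function.update t i (s i)) - v t)
    (s o : (i : Fin n) → S i)
    (F : Finset (Fin n))
    (hm : (∀ i ∈ F, o i ≤ s i) ∨ (∀ i ∈ F, s i ≤ o i)) :
    ∑ i ∈ F, (v s - v (Function.update s i (o i)))
      ≤ v s - v (fun j => if j ∈ F then o j else s j) := by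
  classical
  induction F using Finset.induction_on with
  | empty => simp
  | @insert a F ha ih =>
    have hm' : (∀ i ∈ F, o i ≤ s i) ∨ (∀ i ∈ F, s i ≤ o i) := by
      rcases hm with h | h
      · exact Or.inl fun i hi => h i (Finset.mem_insert_of_mem hi)
      · exact Or.inr fun i hi => h i (Finset.mem_insert_of_mem hi)
    set uF : (j : Fin n) → S j := fun j => if j ∈ F then o j else s j with huF
    have huFa : uF a = s a := by simp [huF, ha]
    have hins : (fun j => if j ∈ insert a F then o j else s j)
        = Function.update uF a (o a) := by
      funext j
      by_cases hj : j = a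
      · subst hj; simp [huF, Function.update_self]
      · simp [huF, Function.update_of_ne hj, hj]
    rw [Finset.sum_insert ha, hins]
    have key : v s - v (Function.update s a (o a))
        ≤ v uF - v (Function.update uF a (o a)) := by
      rcases hm with h | h
      · -- down case: o ≤ s on insert a F
        have ht : ∀ j, Function.update uF a (o a) j ≤ s j := by
          intro j
          by_cases hj : j = a
          · rw [hj, Function.update_self]; exact h a (Finset.mem_insert_self a F)
          · rw [Function.update_of_ne hj]
            simp only [huF]
            by_cases hjF : j ∈ F
            · simpa [hjF] using h j (Finset.mem_insert_of_mem hjF)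
            · simp [hjF]
        have h0 := hsos a s (Function.update uF a (o a)) ht
        rw [Function.update_self, Function.update_idem, ← huFa,
          Function.update_eq_self] at h0
        exact h0
      · -- up case: s ≤ o on insert a F
        have ht : ∀ j, s j ≤ Function.update uF a (o a) j := by
          intro j
          by_cases hj : j = a
          · rw [hj, Function.update_self]; exact h a (Finset.mem_insert_self a F)
          · rw [Function.update_of_ne hj]
            simp only [huF]
            by_cases hjF : j ∈ F
            · simpa [hjF] using h j (Finset.mem_insert_of_mem hjF)
            · simp [hjF]
        have h0 := hsos a (Function.update uF a (o a)) s ht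
        rw [Function.update_self, Function.update_idem, ← huFa,
          Function.update_eq_self] at h0
        linarith
    have := ih hm'
    linarith

/-- Every (possibly non-monotone) SOS valuation function is 2-self-bounding. -/
theorem sos_two_self_bounding {n : ℕ} {S : Fin n → Type*}
    [∀ i, Nonempty (S i)] [∀ i, LinearOrder (S i)]
    (v : ((i : Fin n) → S i) → ℝ)
    (hnonneg : ∀ s, 0 ≤ v s)
    (hsos : ∀ (i : Fin n) (s t : (i : Fin n) → S i), (∀ j, t j ≤ s j) →
      v s - v (Function.update s i (t i)) ≤ v (Function.update t i (s i)) - v t)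
    (s : (i : Fin n) → S i) :
    ∑ i : Fin n, (v s - lowEst v s i) ≤ 2 * v s := by
  classical
  refine le_of_forall_pos_le_add fun ε hε => ?_
  set δ := ε / (n + 1) with hδ
  have hδpos : 0 < δ := by positivity
  -- choose near-minimizers
  have hsel : ∀ i : Fin n, ∃ o : S i,
      v (Function.update s i o) < lowEst v s i + δ := by
    intro i
    obtain ⟨x, hx, hlt⟩ := Real.lt_sInf_add_pos
      (Set.range_nonempty (fun o : S i => v (Function.update s i o))) hδpos
    obtain ⟨o, rfl⟩ := hx
    exact ⟨o, hlt⟩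
  choose o ho using hsel
  have hterm : ∀ i : Fin n, v s - lowEst v s i
      < (v s - v (Function.update s i (o i))) + δ := fun i => by
    have := ho i; linarith
  set D : Finset (Fin n) := Finset.univ.filter (fun i => o i ≤ s i) with hD
  have hDle : ∀ i ∈ D, o i ≤ s i := fun i hi => (Finset.mem_filter.mp hi).2
  have hUle : ∀ i ∈ Dᶜ, s i ≤ o i := by
    intro i hi
    have : ¬ o i ≤ s i := by
      simpa [hD, Finset.mem_compl, Finset.mem_filter] using hi
    exact le_of_lt (lt_of_not_ge this)
  have hDsum := sos_telescope v hsos s o D (Or.inl hDle)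
  have hUsum := sos_telescope v hsos s o Dᶜ (Or.inr hUle)
  have hDb : ∑ i ∈ D, (v s - v (Function.update s i (o i))) ≤ v s :=
    hDsum.trans (by have := hnonneg (fun j => if j ∈ D then o j else s j); linarith)
  have hUb : ∑ i ∈ Dᶜ, (v s - v (Function.update s i (o i))) ≤ v s :=
    hUsum.trans (by have := hnonneg (fun j => if j ∈ Dᶜ then o j else s j); linarith)
  have hsplit : ∑ i : Fin n, (v s - v (Function.update s i (o i)))
      = ∑ i ∈ D, (v s - v (Function.update s i (o i)))
        + ∑ i ∈ Dᶜ, (v s - v (Function.update s i (o i))) :=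
    (Finset.sum_add_sum_compl D _).symm
  have h1 : ∑ i : Fin n, (v s - lowEst v s i)
      ≤ ∑ i : Fin n, ((v s - v (Function.update s i (o i))) + δ) :=
    Finset.sum_le_sum fun i _ => (hterm i).le
  have h2 : ∑ i : Fin n, ((v s - v (Function.update s i (o i))) + δ)
      = ∑ i : Fin n, (v s - v (Function.update s i (o i))) + n * δ := by
    rw [Finset.sum_add_distrib]
    simp [Finset.card_univ]
  have hnδ : (n : ℝ) * δ ≤ ε := by
    have hn1 : (0:ℝ) < (n:ℝ) + 1 := by positivity
    rw [hδ, mul_comm, div_mul_eq_mul_div, div_le_iff₀ hn1]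
    nlinarith [hε.le, Nat.cast_nonneg (α := ℝ) n]
  linarith [h1, h2, hsplit, hDb, hUb]
end

section
/- Single-bidder payment identity for monotone allocations (core of the EPIC-IR implementability proposition): let x : ℝ → ℝ be nondecreasing with 0 ≤ x(t) ≤ 1 for all t ≥ 0, and for v ≥ 0 define the payment p(v) := x(v)·v − ∫_0^v x(t) dt. Then (incentive compatibility) for all v, v′ ≥ 0, x(v)·v − p(v) ≥ x(v′)·v − p(v′), and (individual rationality) for all v ≥ 0, x(v)·v − p(v) ≥ 0. -/
open MeasureTheory intervalIntegral

lemma mono_intervalIntegrable (x : ℝ → ℝ) (hmono : Monotone x) (a b : ℝ) :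
    IntervalIntegrable x volume a b :=
  (hmono.monotoneOn _).intervalIntegrable

lemma key_ineq (x : ℝ → ℝ) (hmono : Monotone x) (v v' : ℝ) :
    x v' * (v - v') ≤ ∫ t in v'..v, x t := by
  rcases le_total v' v with h | h
  · have : ∫ t in v'..v, x v' ≤ ∫ t in v'..v, x t := by
      apply intervalIntegral.integral_mono_on h intervalIntegrable_const
        (mono_intervalIntegrable x hmono v' v)
      intro t ht; exact hmono ht.1
    simpa [intervalIntegral.integral_const, mul_comm] using this
  · have : ∫ t in v..v', x t ≤ ∫ t in v..v', x v' := by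
      apply intervalIntegral.integral_mono_on h
        (mono_intervalIntegrable x hmono v v') intervalIntegrable_const
      intro t ht; exact hmono ht.2
    rw [intervalIntegral.integral_symm]
    simp only [intervalIntegral.integral_const, smul_eq_mul] at this ⊢
    nlinarith

/-- Single-bidder payment identity for monotone allocations: with
`p(v) = x(v)·v − ∫_0^v x(t) dt`, the resulting mechanism is incentive compatible
and individually rational. -/
theorem payment_identity_IC_IR (x : ℝ → ℝ)
    (hmono : Monotone x)
    (hnonneg : ∀ t, 0 ≤ t → 0 ≤ x t)
    (hle_one : ∀ t, 0 ≤ t → x t ≤ 1)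
    (p : ℝ → ℝ)
    (hp : ∀ v, 0 ≤ v → p v = x v * v - ∫ t in (0:ℝ)..v, x t) :
    (∀ v v' : ℝ, 0 ≤ v → 0 ≤ v' → x v' * v - p v' ≤ x v * v - p v) ∧
    (∀ v : ℝ, 0 ≤ v → 0 ≤ x v * v - p v) := by
  constructor
  · intro v v' hv hv'
    rw [hp v hv, hp v' hv']
    have hsplit : (∫ t in (0:ℝ)..v, x t) = (∫ t in (0:ℝ)..v', x t) + ∫ t in v'..v, x t :=
      (intervalIntegral.integral_add_adjacent_intervals
        (mono_intervalIntegrable x hmono 0 v') (mono_intervalIntegrable x hmono v' v)).symm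
    have := key_ineq x hmono v v'
    nlinarith [this, hsplit]
  · intro v hv
    rw [hp v hv]
    have h0 : (0:ℝ) ≤ ∫ t in (0:ℝ)..v, x t := by
      apply intervalIntegral.integral_nonneg hv
      intro t ht; exact hnonneg t ht.1
    linarith
end

section
/- Rounding-threshold probability: for all real a, b > 0, the Lebesgue measure of the set { r ∈ [0,1) : f_r(a) > f_r(b) } equals log₂†(a/b). -/
open MeasureTheory Finset

/-- Truncated base-2 logarithm: `log₂†(a) = max(0, min(1, log₂ a))`. -/
noncomputable def logdag (a : ℝ) : ℝ := max 0 (min 1 (Real.logb 2 a))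

/-- Random rounding-down function: `f_r(w) = 2^(r+k)` for the unique `k ∈ ℤ` with
`2^(r+k) ≤ w < 2^(r+k+1)`. -/
noncomputable def fr (r w : ℝ) : ℝ := (2 : ℝ) ^ (r + (⌊Real.logb 2 w - r⌋ : ℝ))

/-- Rounding-threshold probability: the Lebesgue measure of
`{ r ∈ [0,1) : f_r(a) > f_r(b) }` equals `log₂†(a/b)`. -/
theorem volume_fr_gt (a b : ℝ) (ha : 0 < a) (hb : 0 < b) :
    (volume {r ∈ Set.Ico (0:ℝ) 1 | fr r b < fr r a}).toReal = logdag (a / b) := by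
  set x := Real.logb 2 a with hx
  set y := Real.logb 2 b with hy
  have hd : Real.logb 2 (a / b) = x - y := Real.logb_div ha.ne' hb.ne'
  set fy := Int.fract y with hfy
  have hfy0 : 0 ≤ fy := Int.fract_nonneg y
  have hfy1 : fy < 1 := Int.fract_lt_one y
  set t : ℝ := x - (⌊y⌋ : ℝ) with ht
  have hty : x - y = t - fy := by
    rw [ht, hfy, Int.fract]; ring
  -- pointwise characterization
  have key : ∀ r, r ∈ Set.Ico (0:ℝ) 1 →
      (fr r b < fr r a ↔ ((r ≤ fy ∧ r ≤ t - 1) ∨ (fy < r ∧ r ≤ t))) := by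
    intro r hr
    obtain ⟨hr0, hr1⟩ := hr
    have h1 : fr r b < fr r a ↔ (⌊y - r⌋ : ℝ) < (⌊x - r⌋ : ℝ) := by
      rw [fr, fr, Real.rpow_lt_rpow_left_iff one_lt_two, add_lt_add_iff_left]
    rw [h1, Int.cast_lt, Int.lt_iff_add_one_le, Int.le_floor (z := ⌊y - r⌋ + 1)]
    by_cases hc : r ≤ fy
    · have hfl : ⌊y - r⌋ = ⌊y⌋ := by
        rw [Int.floor_eq_iff]
        constructor
        · have : (⌊y⌋ : ℝ) = y - fy := by rw [hfy, Int.self_sub_fract]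
          rw [this]; linarith
        · have := Int.lt_floor_add_one y
          push_cast; linarith
      rw [hfl]
      constructor
      · intro h
        push_cast at h
        exact Or.inl ⟨hc, by rw [ht]; linarith⟩
      · rintro (⟨_, h2⟩ | ⟨h1, _⟩)
        · push_cast; rw [ht] at h2; linarith
        · exact absurd h1 (not_lt.2 hc)
    · push_neg at hc
      have hfl : ⌊y - r⌋ = ⌊y⌋ - 1 := by
        rw [Int.floor_eq_iff]
        have hyf : (⌊y⌋ : ℝ) = y - fy := by rw [hfy, Int.self_sub_fract]
        push_cast
        constructor
        · linarith
        · linarith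
      rw [hfl]
      constructor
      · intro h; push_cast at h
        exact Or.inr ⟨hc, by rw [ht]; linarith⟩
      · rintro (⟨h1, _⟩ | ⟨_, h2⟩)
        · linarith
        · push_cast; rw [ht] at h2; linarith
  have hS : {r ∈ Set.Ico (0:ℝ) 1 | fr r b < fr r a} =
      {r ∈ Set.Ico (0:ℝ) 1 | (r ≤ fy ∧ r ≤ t - 1) ∨ (fy < r ∧ r ≤ t)} := by
    ext r
    simp only [Set.mem_setOf_eq, Set.mem_sep_iff]
    exact and_congr_right fun hr => key r hr
  rw [hS]
  rcases le_or_gt t fy with hcase | hcase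
  · -- t ≤ fy : empty set, logdag = 0
    have hE : {r ∈ Set.Ico (0:ℝ) 1 | (r ≤ fy ∧ r ≤ t - 1) ∨ (fy < r ∧ r ≤ t)} = ∅ := by
      ext r
      simp only [Set.mem_sep_iff, Set.mem_Ico, Set.mem_empty_iff_false, iff_false]
      rintro ⟨⟨hr0, hr1⟩, ⟨_, h2⟩ | ⟨h1, h2⟩⟩
      · linarith
      · linarith
    rw [hE, measure_empty]
    have : min 1 (Real.logb 2 (a / b)) ≤ 0 := by
      rw [hd, hty]; exact le_trans (min_le_right _ _) (by linarith)
    rw [logdag, max_eq_left this, ENNReal.toReal_zero]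
  · rcases le_or_gt t 1 with hcase2 | hcase2
    · -- fy < t ≤ 1 : volume = t - fy
      set S := {r ∈ Set.Ico (0:ℝ) 1 | (r ≤ fy ∧ r ≤ t - 1) ∨ (fy < r ∧ r ≤ t)} with hSdef
      have hsub1 : Set.Ioo fy t ⊆ S := by
        rintro r ⟨h1, h2⟩
        exact ⟨⟨le_trans hfy0 h1.le, lt_of_lt_of_le h2 hcase2⟩, Or.inr ⟨h1, h2.le⟩⟩
      have hsub2 : S ⊆ Set.Icc fy t ∪ {(0:ℝ)} := by
        rintro r ⟨⟨hr0, hr1⟩, ⟨h1, h2⟩ | ⟨h1, h2⟩⟩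
        · right; simp only [Set.mem_singleton_iff]; linarith
        · left; exact ⟨h1.le, h2⟩
      have hv : volume S = ENNReal.ofReal (t - fy) := by
        apply le_antisymm
        · calc volume S ≤ volume (Set.Icc fy t ∪ {(0:ℝ)}) := measure_mono hsub2
            _ ≤ volume (Set.Icc fy t) + volume {(0:ℝ)} := measure_union_le _ _
            _ = ENNReal.ofReal (t - fy) := by
                rw [Real.volume_Icc, Real.volume_singleton, add_zero]
        · calc ENNReal.ofReal (t - fy) = volume (Set.Ioo fy t) := (Real.volume_Ioo).symm
            _ ≤ volume S := measure_mono hsub1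
      rw [hv, ENNReal.toReal_ofReal (by linarith)]
      have h01 : Real.logb 2 (a / b) = t - fy := by rw [hd, hty]
      rw [logdag, h01, min_eq_right (by linarith), max_eq_right (by linarith)]
    · rcases le_or_gt fy (t - 1) with hcase3 | hcase3
      · -- t > 1, fy ≤ t - 1 : full set, logdag = 1
        have hE : {r ∈ Set.Ico (0:ℝ) 1 | (r ≤ fy ∧ r ≤ t - 1) ∨ (fy < r ∧ r ≤ t)} =
            Set.Ico (0:ℝ) 1 := by
          ext r
          simp only [Set.mem_setOf_eq, Set.mem_sep_iff, Set.mem_Ico, and_iff_left_iff_imp]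
          rintro ⟨hr0, hr1⟩
          by_cases hc : r ≤ fy
          · exact Or.inl ⟨hc, le_trans hc hcase3⟩
          · exact Or.inr ⟨lt_of_not_ge hc, by linarith⟩
        rw [hE, Real.volume_Ico]
        have h1 : (1:ℝ) ≤ Real.logb 2 (a / b) := by rw [hd, hty]; linarith
        rw [logdag, min_eq_left h1, max_eq_right zero_le_one]
        norm_num
      · -- t > 1, t - 1 < fy : volume = (t-1) + (1-fy) = t - fy
        have hE : {r ∈ Set.Ico (0:ℝ) 1 | (r ≤ fy ∧ r ≤ t - 1) ∨ (fy < r ∧ r ≤ t)} =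
            Set.Icc 0 (t - 1) ∪ Set.Ioo fy 1 := by
          ext r
          simp only [Set.mem_sep_iff, Set.mem_Ico, Set.mem_union, Set.mem_Icc, Set.mem_Ioo]
          constructor
          · rintro ⟨⟨hr0, hr1⟩, ⟨h1, h2⟩ | ⟨h1, h2⟩⟩
            · exact Or.inl ⟨hr0, h2⟩
            · exact Or.inr ⟨h1, hr1⟩
          · rintro (⟨h0, h1⟩ | ⟨h1, h2⟩)
            · exact ⟨⟨h0, by linarith⟩, Or.inl ⟨by linarith, h1⟩⟩
            · exact ⟨⟨by linarith, h2⟩, Or.inr ⟨h1, by linarith⟩⟩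
        rw [hE]
        have hdisj : Disjoint (Set.Icc (0:ℝ) (t - 1)) (Set.Ioo fy 1) := by
          rw [Set.disjoint_left]
          rintro r ⟨_, h1⟩ ⟨h2, _⟩
          linarith
        rw [measure_union hdisj measurableSet_Ioo, Real.volume_Icc, Real.volume_Ioo,
          ← ENNReal.ofReal_add (by linarith) (by linarith),
          ENNReal.toReal_ofReal (by linarith)]
        have h01 : Real.logb 2 (a / b) = t - fy := by rw [hd, hty]
        rw [logdag, h01, min_eq_right (by linarith), max_eq_right (by linarith)]
        ring
end

section
/- Expected value of the random discretization: for every real v > 0, ∫_0^1 f_r(v) dr = v / (2 ln 2), where the integral is over r with respect to Lebesgue measure on [0,1). -/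
/-!
Writing `L = log₂ v`, the rounding is `f_r(v) = v · 2^(-fract(L - r))`.
As `r` runs over a period, `fract(L - r)` runs over `[0, 1)` once,
so the integral is `v ∫₀¹ 2^(-s) ds = v / (2 ln 2)`.
-/

open MeasureTheory Finset

theorem fr_eq_mul_rpow_neg_fract (r : ℝ) {w : ℝ} (hw : 0 < w) :
    fr r w = w * (2 : ℝ) ^ (-Int.fract (Real.logb 2 w - r)) := by
  have hexp : r + (⌊Real.logb 2 w - r⌋ : ℝ) =
      Real.logb 2 w + -Int.fract (Real.logb 2 w - r) := by
    rw [Int.fract]; ring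
  rw [fr, hexp, Real.rpow_add two_pos, Real.rpow_logb two_pos (by norm_num) hw]

section
variable {E : Type*} [NormedAddCommGroup E] [NormedSpace ℝ E]

theorem intervalIntegral_comp_fract (g : ℝ → E) :
    ∫ s in (0 : ℝ)..1, g (Int.fract s) = ∫ s in (0 : ℝ)..1, g s := by
  refine intervalIntegral.integral_congr_ae ?_
  filter_upwards [Measure.ae_ne volume (1 : ℝ)] with s hs hmem
  rw [Set.uIoc_of_le zero_le_one] at hmem
  rw [Int.fract_eq_self.mpr ⟨hmem.1.le, hmem.2.lt_of_ne hs⟩]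

theorem intervalIntegral_comp_fract_sub (g : ℝ → E) (c : ℝ) :
    ∫ r in (0 : ℝ)..1, g (Int.fract (c - r)) = ∫ s in (0 : ℝ)..1, g s := by
  have hper : Function.Periodic (fun s => g (Int.fract s)) 1 := fun s => by
    simp only [Int.fract_add_one]
  have hshift := hper.intervalIntegral_add_eq (c - 1) 0
  rw [sub_add_cancel, zero_add] at hshift
  rw [intervalIntegral.integral_comp_sub_left (fun s => g (Int.fract s)), sub_zero, hshift,
    intervalIntegral_comp_fract]

end

theorem integral_const_rpow {b : ℝ} (hb : 0 < b) (hb1 : b ≠ 1) (a c : ℝ) :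
    ∫ s in a..c, b ^ s = (b ^ c - b ^ a) / Real.log b := by
  have hlog : Real.log b ≠ 0 := Real.log_ne_zero_of_pos_of_ne_one hb hb1
  have hderiv : ∀ s ∈ Set.uIcc a c, HasDerivAt (fun s => b ^ s / Real.log b) (b ^ s) s :=
    fun s _ => by
      simpa [hlog] using (Real.hasStrictDerivAt_const_rpow hb s).hasDerivAt.div_const (Real.log b)
  rw [intervalIntegral.integral_eq_sub_of_hasDerivAt hderiv
    ((continuous_const.rpow continuous_id fun _ => Or.inl hb.ne').intervalIntegrable a c), sub_div]

/-- Expected value of the random discretization: `∫_0^1 f_r(v) dr = v / (2 ln 2)`. -/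
theorem integral_fr (v : ℝ) (hv : 0 < v) :
    ∫ r in (0:ℝ)..1, fr r v = v / (2 * Real.log 2) := by
  simp only [fr_eq_mul_rpow_neg_fract _ hv]
  rw [intervalIntegral.integral_const_mul,
    intervalIntegral_comp_fract_sub (fun s => (2 : ℝ) ^ (-s)), intervalIntegral.integral_comp_neg,
    integral_const_rpow two_pos (by norm_num)]
  norm_num
  field_simp
end

section
/- Truncated-log bound for d-self-bounding valuations: let v be a d-self-bounding valuation function and s a signal profile with v(s) > 0 and low_i(v,s) > 0 for every bidder i. Then ∑_{i=1}^n log₂†( v(s) / low_i(v,s) ) ≤ 2d. -/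
open MeasureTheory Finset

lemma core_r (r : ℝ) (hr0 : 0 < r) (hr1 : r ≤ 1) :
    min 1 (Real.logb 2 (1/r)) ≤ 2*(1-r) := by
  rcases le_or_gt r (1/2) with h | h
  · calc min 1 (Real.logb 2 (1/r)) ≤ 1 := min_le_left _ _
    _ ≤ 2*(1-r) := by linarith
  · refine le_trans (min_le_right _ _) ?_
    have hlog : Real.logb 2 (1/r) = -Real.log r / Real.log 2 := by
      rw [Real.logb, Real.log_div one_ne_zero (ne_of_gt hr0), Real.log_one]
      ring
    have hconc := strictConcaveOn_log_Ioi.concaveOn.2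
      (show (1/2:ℝ) ∈ Set.Ioi 0 by norm_num) (show (1:ℝ) ∈ Set.Ioi 0 by norm_num)
      (show (0:ℝ) ≤ 2*(1-r) by linarith) (show (0:ℝ) ≤ 2*r-1 by linarith)
      (by ring)
    simp only [smul_eq_mul, Real.log_one, mul_zero, add_zero] at hconc
    have heq : (2*(1-r)) * (1/2:ℝ) + (2*r-1) * 1 = r := by ring
    rw [heq] at hconc
    have h12 : Real.log (1/2:ℝ) = -Real.log 2 := by
      rw [Real.log_div one_ne_zero two_ne_zero, Real.log_one]; ring
    rw [h12] at hconc
    have hl2 : (0:ℝ) < Real.log 2 := Real.log_pos (by norm_num)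
    rw [hlog, div_le_iff₀ hl2]
    nlinarith

lemma core_Vl (V l : ℝ) (hl : 0 < l) (hlV : l ≤ V) :
    logdag (V/l) ≤ 2*(V-l)/V := by
  have hV : 0 < V := lt_of_lt_of_le hl hlV
  have hr0 : 0 < l/V := div_pos hl hV
  have hr1 : l/V ≤ 1 := (div_le_one hV).2 hlV
  have h := core_r (l/V) hr0 hr1
  have h1 : (1:ℝ)/(l/V) = V/l := by field_simp
  rw [h1] at h
  have h2 : 2*(1 - l/V) = 2*(V-l)/V := by field_simp
  rw [h2] at h
  unfold logdag
  refine max_le ?_ h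
  have : 0 ≤ V - l := by linarith
  positivity

/-- Truncated-log bound for d-self-bounding valuations. -/
theorem logdag_sum_le_of_self_bounding {n : ℕ} {S : Fin n → Type*} [∀ i, Nonempty (S i)]
    (d : ℕ) (v : ((i : Fin n) → S i) → ℝ)
    (hnonneg : ∀ s, 0 ≤ v s)
    (hsb : ∀ s : (i : Fin n) → S i, ∑ i : Fin n, (v s - lowEst v s i) ≤ (d : ℝ) * v s)
    (s : (i : Fin n) → S i)
    (hvs : 0 < v s) (hlow : ∀ i, 0 < lowEst v s i) :
    ∑ i : Fin n, logdag (v s / lowEst v s i) ≤ 2 * (d : ℝ) := by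
  have hle : ∀ i, lowEst v s i ≤ v s := by
    intro i
    have : v (Function.update s i (s i)) ∈ Set.range fun o : S i => v (Function.update s i o) :=
      Set.mem_range_self _
    have h := csInf_le ⟨0, fun x hx => by
      obtain ⟨o, rfl⟩ := hx; exact hnonneg _⟩ this
    rwa [Function.update_eq_self] at h
  calc ∑ i : Fin n, logdag (v s / lowEst v s i)
      ≤ ∑ i : Fin n, 2*(v s - lowEst v s i)/(v s) := by
        exact Finset.sum_le_sum fun i _ => core_Vl _ _ (hlow i) (hle i)
    _ = (2/(v s)) * ∑ i : Fin n, (v s - lowEst v s i) := by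
        rw [Finset.mul_sum]; exact Finset.sum_congr rfl fun i _ => by ring
    _ ≤ (2/(v s)) * ((d:ℝ) * v s) := by
        exact mul_le_mul_of_nonneg_left (hsb s) (by positivity)
    _ = 2 * (d:ℝ) := by field_simp
end

section
/- Feasibility bound for the A-terms: let v_1,…,v_n be d-self-bounding valuation functions and s a signal profile, with bidders renamed so that v_1(s) ≥ v_2(s) ≥ ⋯ ≥ v_n(s) > 0; let k := max{ i : v_i(s) > v_1(s)/2 }, and write low_j^i := inf_{o_i ∈ S_i} v_j(o_i, s_{-i}), assumed positive for all i, j. Then ∑_{i=1}^n [ log₂†( v_1(s)/low_1^i ) / (k+1) + ∑_{j=1}^k log₂†( v_j(s)/low_j^i ) / (j(j+1)) ] ≤ 2d. -/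
open MeasureTheory Finset

/-- Concavity estimate: for `1/2 ≤ b ≤ 1`, `-log b ≤ 2 (1 - b) * log 2`. -/
lemma neg_log_le {b : ℝ} (hb1 : 1/2 ≤ b) (hb2 : b ≤ 1) :
    -Real.log b ≤ 2 * (1 - b) * Real.log 2 := by
  have hθ0 : (0:ℝ) ≤ 2 * (1 - b) := by linarith
  have hθ1 : (0:ℝ) ≤ 1 - 2 * (1 - b) := by linarith
  have hconc := strictConcaveOn_log_Ioi.concaveOn.2
    (Set.mem_Ioi.mpr (by norm_num : (0:ℝ) < 1/2))
    (Set.mem_Ioi.mpr (by norm_num : (0:ℝ) < 1))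
    hθ0 hθ1 (by ring)
  have hcomb : (2 * (1 - b)) • (1/2 : ℝ) + (1 - 2 * (1 - b)) • (1:ℝ) = b := by
    simp only [smul_eq_mul]; ring
  rw [hcomb] at hconc
  have hlog12 : Real.log (1/2 : ℝ) = -Real.log 2 := by
    rw [one_div, Real.log_inv]
  simp only [smul_eq_mul, hlog12, Real.log_one, mul_zero, add_zero] at hconc
  nlinarith [hconc]

/-- Key pointwise bound: `logdag (x / y) ≤ 2 (x - y) / x` for `0 < y ≤ x`. -/
lemma logdag_le_two_mul {x y : ℝ} (hy : 0 < y) (hxy : y ≤ x) :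
    logdag (x / y) ≤ 2 * (x - y) / x := by
  have hx : 0 < x := hy.trans_le hxy
  have ha1 : 1 ≤ x / y := (one_le_div hy).2 hxy
  have hrhs : 2 * (x - y) / x = 2 * (1 - y / x) := by field_simp
  rw [hrhs]
  rcases le_or_gt 2 (x / y) with h2 | h2
  · have h1 : logdag (x / y) ≤ 1 :=
      max_le (by norm_num) (min_le_left _ _)
    have h2y : 2 * y ≤ x := by
      have := (le_div_iff₀ hy).1 h2
      linarith
    have : y / x ≤ 1 / 2 := by
      rw [div_le_div_iff₀ hx (by norm_num)]
      linarith
    linarith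
  · -- 1 ≤ x/y < 2, use concavity
    have hL0 : 0 ≤ Real.logb 2 (x / y) := Real.logb_nonneg (by norm_num) ha1
    have h1 : logdag (x / y) ≤ Real.logb 2 (x / y) :=
      max_le hL0 (min_le_right _ _)
    have hb1 : 1/2 ≤ y / x := by
      rw [le_div_iff₀ hx]
      have := (div_lt_iff₀ hy).1 h2
      linarith
    have hb2 : y / x ≤ 1 := by
      rw [div_le_one hx]; exact hxy
    have hneg := neg_log_le hb1 hb2
    have hlog2 : (0:ℝ) < Real.log 2 := Real.log_pos (by norm_num)
    have hxyinv : x / y = (y / x)⁻¹ := by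
      field_simp
    have hlogeq : Real.log (x / y) = -Real.log (y / x) := by
      rw [hxyinv, Real.log_inv]
    have : Real.logb 2 (x / y) ≤ 2 * (1 - y / x) := by
      rw [Real.logb, hlogeq, div_le_iff₀ hlog2]
      linarith
    linarith

private lemma sum_range_telescope (k : ℕ) :
    ∑ j ∈ Finset.range k, (1:ℝ) / (((j:ℝ) + 1) * ((j:ℝ) + 2)) = 1 - 1 / ((k:ℝ) + 1) := by
  induction k with
  | zero => simp
  | succ m ih =>
    rw [Finset.sum_range_succ, ih]
    have h1 : ((m:ℝ) + 1) ≠ 0 := by positivity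
    have h2 : ((m:ℝ) + 2) ≠ 0 := by positivity
    push_cast
    field_simp
    ring

/-- Feasibility bound for the A-terms.  Bidders are indexed by `Fin n` (so bidder
`i : Fin n` plays the role of the 1-indexed bidder `i.val + 1`); they are sorted in
nonincreasing order of value, and `k` is the number of bidders whose value exceeds
half the highest value. -/
theorem A_terms_bound {n : ℕ} {S : Fin n → Type*} [∀ i, Nonempty (S i)] (hn : 0 < n)
    (d : ℕ) (v : Fin n → ((i : Fin n) → S i) → ℝ)
    (hnonneg : ∀ j s, 0 ≤ v j s)
    (hsb : ∀ (j : Fin n) (s : (i : Fin n) → S i),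
      ∑ i : Fin n, (v j s - lowEst (v j) s i) ≤ (d : ℝ) * v j s)
    (s : (i : Fin n) → S i)
    (hsorted : ∀ i j : Fin n, i ≤ j → v j s ≤ v i s)
    (hpos : ∀ i, 0 < v i s)
    (hlowpos : ∀ j i, 0 < lowEst (v j) s i)
    (k : ℕ) (hk : k ≤ n)
    (hkdef : ∀ i : Fin n, (i.val < k ↔ v ⟨0, hn⟩ s / 2 < v i s)) :
    ∑ i : Fin n,
        (logdag (v ⟨0, hn⟩ s / lowEst (v ⟨0, hn⟩) s i) / ((k : ℝ) + 1)
          + ∑ j ∈ Finset.univ.filter (fun j : Fin n => j.val < k),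
              logdag (v j s / lowEst (v j) s i) / (((j.val : ℝ) + 1) * ((j.val : ℝ) + 2)))
      ≤ 2 * (d : ℝ) := by
  -- per-valuation bound
  have key : ∀ j : Fin n, ∑ i : Fin n, logdag (v j s / lowEst (v j) s i) ≤ 2 * (d : ℝ) := by
    intro j
    have hv : 0 < v j s := hpos j
    have hle : ∀ i, lowEst (v j) s i ≤ v j s := by
      intro i
      have hbdd : BddBelow (Set.range fun o : S i => v j (Function.update s i o)) := by
        by_contra hb
        have h0 := Real.sInf_of_not_bddBelow hb
        have hp := hlowpos j i
        rw [lowEst, h0] at hp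
        exact lt_irrefl 0 hp
      calc lowEst (v j) s i ≤ v j (Function.update s i (s i)) := csInf_le hbdd ⟨s i, rfl⟩
        _ = v j s := by rw [Function.update_eq_self]
    calc ∑ i : Fin n, logdag (v j s / lowEst (v j) s i)
        ≤ ∑ i : Fin n, 2 * (v j s - lowEst (v j) s i) / (v j s) :=
          Finset.sum_le_sum fun i _ => logdag_le_two_mul (hlowpos j i) (hle i)
      _ = (2 / v j s) * ∑ i : Fin n, (v j s - lowEst (v j) s i) := by
          rw [Finset.mul_sum]
          refine Finset.sum_congr rfl fun i _ => ?_
          field_simp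
      _ ≤ (2 / v j s) * ((d : ℝ) * v j s) :=
          mul_le_mul_of_nonneg_left (hsb j s) (by positivity)
      _ = 2 * (d : ℝ) := by field_simp
  have hk1 : (0:ℝ) < (k : ℝ) + 1 := by positivity
  -- split the big sum
  rw [Finset.sum_add_distrib]
  -- first part
  have hpart1 : ∑ i : Fin n, logdag (v ⟨0, hn⟩ s / lowEst (v ⟨0, hn⟩) s i) / ((k : ℝ) + 1)
      ≤ 2 * (d : ℝ) / ((k : ℝ) + 1) := by
    rw [← Finset.sum_div]
    exact div_le_div_of_nonneg_right (key _) hk1.le |>.trans_eq rfl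
  -- second part
  have hpart2 : ∑ i : Fin n, ∑ j ∈ Finset.univ.filter (fun j : Fin n => j.val < k),
        logdag (v j s / lowEst (v j) s i) / (((j.val : ℝ) + 1) * ((j.val : ℝ) + 2))
      ≤ 2 * (d : ℝ) * (1 - 1 / ((k : ℝ) + 1)) := by
    rw [Finset.sum_comm]
    have hstep : ∑ j ∈ Finset.univ.filter (fun j : Fin n => j.val < k),
          ∑ i : Fin n, logdag (v j s / lowEst (v j) s i) / (((j.val : ℝ) + 1) * ((j.val : ℝ) + 2))
        ≤ ∑ j ∈ Finset.univ.filter (fun j : Fin n => j.val < k),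
          2 * (d : ℝ) * ((1:ℝ) / (((j.val : ℝ) + 1) * ((j.val : ℝ) + 2))) := by
      refine Finset.sum_le_sum fun j _ => ?_
      have hc : (0:ℝ) < ((j.val : ℝ) + 1) * ((j.val : ℝ) + 2) := by positivity
      rw [← Finset.sum_div]
      rw [div_le_iff₀ hc]
      have := key j
      calc ∑ i : Fin n, logdag (v j s / lowEst (v j) s i) ≤ 2 * (d : ℝ) := key j
        _ = 2 * (d : ℝ) * ((1:ℝ) / (((j.val : ℝ) + 1) * ((j.val : ℝ) + 2))) *
              (((j.val : ℝ) + 1) * ((j.val : ℝ) + 2)) := by field_simp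
    refine hstep.trans ?_
    rw [← Finset.mul_sum]
    have hsum : ∑ j ∈ Finset.univ.filter (fun j : Fin n => j.val < k),
          (1:ℝ) / (((j.val : ℝ) + 1) * ((j.val : ℝ) + 2))
        = ∑ j ∈ Finset.range k, (1:ℝ) / (((j:ℝ) + 1) * ((j:ℝ) + 2)) := by
      refine Finset.sum_bij (fun j _ => j.val) ?_ ?_ ?_ ?_
      · intro j hj
        simp only [Finset.mem_filter] at hj
        exact Finset.mem_range.mpr hj.2
      · intro a ha b hb hab
        exact Fin.val_injective hab
      · intro m hm
        refine ⟨⟨m, lt_of_lt_of_le (Finset.mem_range.mp hm) hk⟩, ?_, rfl⟩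
        simp [Finset.mem_range.mp hm]
      · intro j hj; rfl
    rw [hsum, sum_range_telescope]
  have hfinal : 2 * (d : ℝ) / ((k : ℝ) + 1) + 2 * (d : ℝ) * (1 - 1 / ((k : ℝ) + 1))
      = 2 * (d : ℝ) := by
    field_simp
    ring
  linarith
end

section
/- Feasibility bound for the B-terms: let w_1 ≥ w_2 ≥ ⋯ ≥ w_n > 0 be real numbers and k := max{ i : w_i > w_1/2 }. Then ∑_{i=1}^n [ log₂†( 2 w_i / w_1 ) / (k+1) + ∑_{j=1}^k log₂†( w_i / w_j ) / (j(j+1)) ] ≤ 1. -/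
open Finset

lemma logdag_nonneg (a : ℝ) : 0 ≤ logdag a := le_max_left _ _

lemma logdag_le_one (a : ℝ) : logdag a ≤ 1 := max_le zero_le_one (min_le_left _ _)

lemma logdag_eq_zero {a : ℝ} (h0 : 0 ≤ a) (h : a ≤ 1) : logdag a = 0 := by
  have h1 : Real.logb 2 a ≤ 0 := Real.logb_nonpos one_lt_two h0 h
  exact max_eq_left (le_trans (min_le_right _ _) h1)

lemma logdag_le_logb {a : ℝ} (h : 0 ≤ Real.logb 2 a) : logdag a ≤ Real.logb 2 a :=
  max_le h (min_le_right _ _)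

lemma logdag_eq_logb {a : ℝ} (h0 : 0 ≤ Real.logb 2 a) (h1 : Real.logb 2 a ≤ 1) :
    logdag a = Real.logb 2 a := by
  unfold logdag; rw [min_eq_right h1, max_eq_right h0]

lemma tele (k : ℕ) :
    ∑ i ∈ Finset.range k, (1:ℝ) / (((i:ℝ)+1)*((i:ℝ)+2)) = 1 - 1/((k:ℝ)+1) := by
  induction k with
  | zero => simp
  | succ k ih =>
    rw [Finset.sum_range_succ, ih]
    have h1 : (k:ℝ)+1 ≠ 0 := by positivity
    have h2 : (k:ℝ)+2 ≠ 0 := by positivity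
    push_cast
    field_simp
    ring

lemma Jlem (x : ℕ → ℝ) (k : ℕ) :
    ∑ i ∈ Finset.range k, ∑ j ∈ Finset.range k,
        (if i < j then (x i - x j) / (((j:ℝ)+1)*((j:ℝ)+2)) else 0)
      = ∑ i ∈ Finset.range k, x i * (1/(((i:ℝ)+1)*((i:ℝ)+2)) - 1/((k:ℝ)+1)) := by
  induction k with
  | zero => simp
  | succ k ih =>
    have h1 : (k:ℝ)+1 ≠ 0 := by positivity
    have h2 : (k:ℝ)+2 ≠ 0 := by positivity
    rw [Finset.sum_range_succ]
    have hrow : ∑ j ∈ Finset.range (k+1),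
        (if k < j then (x k - x j)/(((j:ℝ)+1)*((j:ℝ)+2)) else 0) = 0 := by
      apply Finset.sum_eq_zero
      intro j hj
      have := Finset.mem_range.mp hj
      rw [if_neg (by omega)]
    rw [hrow, add_zero]
    have hinner : ∀ i ∈ Finset.range k,
        (∑ j ∈ Finset.range (k+1),
            (if i < j then (x i - x j)/(((j:ℝ)+1)*((j:ℝ)+2)) else 0))
        = (∑ j ∈ Finset.range k,
            (if i < j then (x i - x j)/(((j:ℝ)+1)*((j:ℝ)+2)) else 0))
          + (x i - x k)/(((k:ℝ)+1)*((k:ℝ)+2)) := by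
      intro i hi
      rw [Finset.sum_range_succ, if_pos (Finset.mem_range.mp hi)]
    rw [Finset.sum_congr rfl hinner, Finset.sum_add_distrib, ih,
      Finset.sum_range_succ, ← Finset.sum_add_distrib]
    have hco : ∀ i ∈ Finset.range k,
        x i * (1/(((i:ℝ)+1)*((i:ℝ)+2)) - 1/((k:ℝ)+1))
          + (x i - x k)/(((k:ℝ)+1)*((k:ℝ)+2))
        = (x i * (1/(((i:ℝ)+1)*((i:ℝ)+2)) - 1/((↑(k+1):ℝ)+1)))
          + (- x k / (((k:ℝ)+1)*((k:ℝ)+2))) := by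
      intro i _
      push_cast
      have : -(1/((k:ℝ)+1)) + 1/(((k:ℝ)+1)*((k:ℝ)+2)) = -(1/((k:ℝ)+2)) := by
        field_simp
        ring
      linear_combination x i * this
    rw [Finset.sum_congr rfl hco, Finset.sum_add_distrib, Finset.sum_const,
      Finset.card_range]
    push_cast
    have : (k:ℝ) • (-x k / (((k:ℝ)+1)*((k:ℝ)+2)))
        = x k * (1/(((k:ℝ)+1)*((k:ℝ)+2)) - 1/((k:ℝ)+1+1)) := by
      rw [smul_eq_mul]
      field_simp
      ring
    rw [nsmul_eq_mul, show ((k:ℕ):ℝ) = (k:ℝ) from rfl]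
    rw [show ((k:ℝ)) * (-x k / (((k:ℝ)+1)*((k:ℝ)+2)))
        = x k * (1/(((k:ℝ)+1)*((k:ℝ)+2)) - 1/((k:ℝ)+1+1)) from by
      field_simp; ring]

lemma key (k : ℕ) (x : ℕ → ℝ) (hx0 : ∀ i, 0 ≤ x i) (hx1 : ∀ i, x i ≤ 1) :
    ∑ i ∈ Finset.range k,
        (x i / ((k:ℝ)+1) + ∑ j ∈ Finset.range k,
            (if i < j then (x i - x j)/(((j:ℝ)+1)*((j:ℝ)+2)) else 0)) ≤ 1 := by
  rw [Finset.sum_add_distrib, Jlem, ← Finset.sum_add_distrib]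
  have hre : ∀ i ∈ Finset.range k,
      x i/((k:ℝ)+1) + x i * (1/(((i:ℝ)+1)*((i:ℝ)+2)) - 1/((k:ℝ)+1))
        = x i / (((i:ℝ)+1)*((i:ℝ)+2)) := by
    intro i _; ring
  rw [Finset.sum_congr rfl hre]
  have hb : ∑ i ∈ Finset.range k, x i / (((i:ℝ)+1)*((i:ℝ)+2))
      ≤ ∑ i ∈ Finset.range k, (1:ℝ) / (((i:ℝ)+1)*((i:ℝ)+2)) := by
    apply Finset.sum_le_sum
    intro i _
    have hc : (0:ℝ) ≤ ((i:ℝ)+1)*((i:ℝ)+2) := by positivity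
    exact div_le_div_of_nonneg_right (hx1 i) hc
  refine le_trans hb ?_
  rw [tele]
  have : (0:ℝ) ≤ 1/((k:ℝ)+1) := by positivity
  linarith

/-- Feasibility bound for the B-terms.  The values `w i` are indexed by `Fin n`
(so `w i` plays the role of the 1-indexed value `w_{i.val+1}`), sorted in
nonincreasing order, and `k` is the number of indices whose value exceeds half
the highest value. -/
theorem B_terms_bound {n : ℕ} (hn : 0 < n) (w : Fin n → ℝ)
    (hsorted : ∀ i j : Fin n, i ≤ j → w j ≤ w i)
    (hpos : ∀ i, 0 < w i)
    (k : ℕ) (hk : k ≤ n)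
    (hkdef : ∀ i : Fin n, (i.val < k ↔ w ⟨0, hn⟩ / 2 < w i)) :
    ∑ i : Fin n,
        (logdag (2 * w i / w ⟨0, hn⟩) / ((k : ℝ) + 1)
          + ∑ j ∈ Finset.univ.filter (fun j : Fin n => j.val < k),
              logdag (w i / w j) / (((j.val : ℝ) + 1) * ((j.val : ℝ) + 2)))
      ≤ 1 := by
  set w0 := w ⟨0, hn⟩ with hw0def
  have hw0 : 0 < w0 := hpos _
  have hwle : ∀ i : Fin n, w i ≤ w0 := fun i =>
    hsorted ⟨0, hn⟩ i (by simp [Fin.le_def])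
  set x : ℕ → ℝ := fun m => if h : m < n then logdag (2 * w ⟨m, h⟩ / w0) else 0
    with hxdef
  have hx0 : ∀ m, 0 ≤ x m := by
    intro m; simp only [hxdef]; split
    · exact logdag_nonneg _
    · exact le_refl 0
  have hx1 : ∀ m, x m ≤ 1 := by
    intro m; simp only [hxdef]; split
    · exact logdag_le_one _
    · norm_num
  have hxval : ∀ i : Fin n, x i.val = logdag (2 * w i / w0) := by
    intro i; simp only [hxdef]; rw [dif_pos i.isLt]
  -- logdag equals logb for indices below k
  have hXlogb : ∀ i : Fin n, i.val < k →
      logdag (2 * w i / w0) = Real.logb 2 (2 * w i / w0) := by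
    intro i hik
    have h2 : w0 / 2 < w i := (hkdef i).mp hik
    have hai1 : 1 ≤ 2 * w i / w0 := by
      rw [le_div_iff₀ hw0]; linarith
    have hai2 : 2 * w i / w0 ≤ 2 := by
      rw [div_le_iff₀ hw0]; have := hwle i; linarith
    refine logdag_eq_logb (Real.logb_nonneg one_lt_two hai1) ?_
    calc Real.logb 2 (2 * w i / w0) ≤ Real.logb 2 2 :=
          Real.logb_le_logb_of_le one_lt_two (by linarith) hai2
      _ = 1 := Real.logb_self_eq_one one_lt_two
  -- the crucial pairwise bound
  have hFact3 : ∀ i j : Fin n, i.val < j.val → j.val < k →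
      logdag (w i / w j) ≤ x i.val - x j.val := by
    intro i j hij hjk
    have hik : i.val < k := lt_trans hij hjk
    have hji : w j ≤ w i := hsorted i j (by exact le_of_lt hij)
    have hipos := hpos i
    have hjpos := hpos j
    have hine : 2 * w i / w0 ≠ 0 := ne_of_gt (div_pos (by linarith) hw0)
    have hjne : 2 * w j / w0 ≠ 0 := ne_of_gt (div_pos (by linarith) hw0)
    have hratio : (2 * w i / w0) / (2 * w j / w0) = w i / w j := by
      field_simp
    have hlog : Real.logb 2 (w i / w j)
        = Real.logb 2 (2 * w i / w0) - Real.logb 2 (2 * w j / w0) := by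
      rw [← Real.logb_div hine hjne, hratio]
    have h0 : 0 ≤ Real.logb 2 (w i / w j) :=
      Real.logb_nonneg one_lt_two ((one_le_div hjpos).mpr hji)
    calc logdag (w i / w j) ≤ Real.logb 2 (w i / w j) := logdag_le_logb h0
      _ = x i.val - x j.val := by
          rw [hlog, hxval i, hxval j, hXlogb i hik, hXlogb j hjk]
  -- vanishing facts
  have hX0 : ∀ i : Fin n, k ≤ i.val → logdag (2 * w i / w0) = 0 := by
    intro i hik
    have : ¬ (w0 / 2 < w i) := fun h => absurd ((hkdef i).mpr h) (not_lt.mpr hik)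
    have hle : w i ≤ w0 / 2 := not_lt.mp this
    exact logdag_eq_zero (le_of_lt (div_pos (by have := hpos i; linarith) hw0))
      ((div_le_one hw0).mpr (by linarith))
  have hD0 : ∀ i j : Fin n, j ≤ i → logdag (w i / w j) = 0 := by
    intro i j hji
    exact logdag_eq_zero (le_of_lt (div_pos (hpos i) (hpos j)))
      ((div_le_one (hpos j)).mpr (hsorted j i hji))
  -- conversion of filtered Fin sums to range sums
  have hconv : ∀ f : Fin n → ℝ,
      ∑ j ∈ Finset.univ.filter (fun j : Fin n => j.val < k), f j
        = ∑ m ∈ Finset.range k, (if h : m < n then f ⟨m, h⟩ else 0) := by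
    intro f
    rw [Finset.sum_filter]
    have h1 : ∑ j : Fin n, (if j.val < k then f j else 0)
        = ∑ m ∈ Finset.range n,
            (if h : m < n then (if m < k then f ⟨m, h⟩ else 0) else 0) := by
      rw [← Fin.sum_univ_eq_sum_range]
      exact Finset.sum_congr rfl fun j _ => by simp [j.isLt]
    rw [h1, ← Finset.sum_subset (Finset.range_subset_range.mpr hk)
      (fun m _ hm => by
        have : ¬ m < k := fun h => hm (Finset.mem_range.mpr h)
        simp [this])]
    apply Finset.sum_congr rfl
    intro m hm
    have hmk := Finset.mem_range.mp hm
    rw [dif_pos (lt_of_lt_of_le hmk hk), if_pos hmk, dif_pos]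
  -- the pointwise majorant
  set t : ℕ → ℝ := fun m =>
    if m < k then
      (x m / ((k:ℝ)+1) + ∑ j ∈ Finset.range k,
          (if m < j then (x m - x j)/(((j:ℝ)+1)*((j:ℝ)+2)) else 0))
    else 0 with htdef
  have hmain : ∀ i : Fin n,
      logdag (2 * w i / w0) / ((k : ℝ) + 1)
        + ∑ j ∈ Finset.univ.filter (fun j : Fin n => j.val < k),
            logdag (w i / w j) / (((j.val : ℝ) + 1) * ((j.val : ℝ) + 2))
      ≤ t i.val := by
    intro i
    by_cases hik : i.val < k
    · simp only [htdef]
      rw [if_pos hik]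
      apply add_le_add
      · rw [hxval i]
      · rw [hconv (fun j => logdag (w i / w j) / (((j.val : ℝ) + 1) * ((j.val : ℝ) + 2)))]
        apply Finset.sum_le_sum
        intro m hm
        have hmk : m < k := Finset.mem_range.mp hm
        have hmn : m < n := lt_of_lt_of_le hmk hk
        rw [dif_pos hmn]
        by_cases him : i.val < m
        · rw [if_pos him]
          have h3 := hFact3 i ⟨m, hmn⟩ him hmk
          have hc : (0:ℝ) ≤ ((m:ℝ)+1)*((m:ℝ)+2) := by positivity
          exact div_le_div_of_nonneg_right h3 hc
        · rw [if_neg him]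
          rw [hD0 i ⟨m, hmn⟩ (Fin.le_def.mpr (not_lt.mp him))]
          simp
    · simp only [htdef]
      rw [if_neg hik]
      have h1 : logdag (2 * w i / w0) = 0 := hX0 i (not_lt.mp hik)
      have h2 : ∑ j ∈ Finset.univ.filter (fun j : Fin n => j.val < k),
          logdag (w i / w j) / (((j.val : ℝ) + 1) * ((j.val : ℝ) + 2)) = 0 := by
        apply Finset.sum_eq_zero
        intro j hj
        have hjk : j.val < k := (Finset.mem_filter.mp hj).2
        rw [hD0 i j (Fin.le_def.mpr (le_trans (le_of_lt hjk) (not_lt.mp hik))), zero_div]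
      rw [h1, h2, zero_div, add_zero]
  calc ∑ i : Fin n,
        (logdag (2 * w i / w0) / ((k : ℝ) + 1)
          + ∑ j ∈ Finset.univ.filter (fun j : Fin n => j.val < k),
              logdag (w i / w j) / (((j.val : ℝ) + 1) * ((j.val : ℝ) + 2)))
      ≤ ∑ i : Fin n, t i.val := Finset.sum_le_sum (fun i _ => hmain i)
    _ = ∑ m ∈ Finset.range n, t m := Fin.sum_univ_eq_sum_range t n
    _ = ∑ m ∈ Finset.range k, t m :=
        (Finset.sum_subset (Finset.range_subset_range.mpr hk)
          (fun m _ hm => by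
            simp only [htdef]
            rw [if_neg (fun h => hm (Finset.mem_range.mpr h))])).symm
    _ = ∑ m ∈ Finset.range k,
          (x m / ((k:ℝ)+1) + ∑ j ∈ Finset.range k,
              (if m < j then (x m - x j)/(((j:ℝ)+1)*((j:ℝ)+2)) else 0)) := by
        apply Finset.sum_congr rfl
        intro m hm
        simp only [htdef]
        rw [if_pos (Finset.mem_range.mp hm)]
    _ ≤ 1 := key k x hx0 hx1
end

section
/- Candidate-probability bound: let v_1,…,v_n be valuation functions and s a signal profile with bidders renamed so that v_1(s) ≥ ⋯ ≥ v_n(s) > 0; let k := max{ i : v_i(s) > v_1(s)/2 } and low_j^i := inf_{o_i ∈ S_i} v_j(o_i, s_{-i}), assumed positive for all i, j. Then for every bidder i, E_{r,π}[c_i] ≤ 1/(i(i+1)) + log₂†( 2 v_i(s)/low_1^i ) / (k+1) + ∑_{j ∈ [k], j ≠ i} log₂†( v_i(s)/low_j^i ) / (j(j+1)). -/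
open MeasureTheory Finset

/-- Lexicographic tie-breaking: `a >_π b`, where `a` is associated with bidder `i`
and `b` with bidder `j`, holds if `a > b`, or `a = b` and `π(i) > π(j)`. -/
def lexGt {n : ℕ} (π : Equiv.Perm (Fin n)) (i j : Fin n) (a b : ℝ) : Prop :=
  b < a ∨ (a = b ∧ π j < π i)

noncomputable instance {n : ℕ} (π : Equiv.Perm (Fin n)) (i j : Fin n) (a b : ℝ) :
    Decidable (lexGt π i j a b) := by unfold lexGt; infer_instance

/-- Bidder `i` is a candidate (for random seed `r` and tie-breaking permutation `π`)
if `f_r(v_i(s)) >_π f_r(low_j^i)` for every bidder `j ≠ i`. -/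
def IsCandidate {n : ℕ} {S : Fin n → Type*} [∀ i, Nonempty (S i)]
    (v : Fin n → ((i : Fin n) → S i) → ℝ) (s : (i : Fin n) → S i)
    (r : ℝ) (π : Equiv.Perm (Fin n)) (i : Fin n) : Prop :=
  ∀ j, j ≠ i → lexGt π i j (fr r (v i s)) (fr r (lowEst (v j) s i))

/-- `E_{r,π}[c_i]`: the probability that bidder `i` is a candidate, with `r`
uniform on `[0,1)` and `π` uniform over all `n!` permutations. -/
noncomputable def Ecand {n : ℕ} {S : Fin n → Type*} [∀ i, Nonempty (S i)]
    (v : Fin n → ((i : Fin n) → S i) → ℝ) (s : (i : Fin n) → S i) (i : Fin n) : ℝ :=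
  (n.factorial : ℝ)⁻¹ * ∑ π : Equiv.Perm (Fin n),
    (volume {r ∈ Set.Ico (0:ℝ) 1 | IsCandidate v s r π i}).toReal

/-!
Fix the seed `r`. If `f_r(low_j^i) > f_r(v_i(s))` for some `j ≠ i`, no permutation makes `i` a
candidate. Otherwise `i` is a candidate exactly when `π` ranks it above the `t` bidders `j` with
`f_r(low_j^i) = f_r(v_i(s))`, which happens for a fraction `1/(t+1)` of all `π`; moreover
`f_r(low_1^i) ≤ f_r(v_i(s)) < f_r(2 v_i(s))`. Every top-`k` bidder `j ≠ i` that is not tied has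
`f_r(low_j^i) < f_r(v_i(s))`, and since the weights `1/(j(j+1))` telescope and decrease, `1/(t+1)`
is at most `1/(i(i+1)) + 1/(k+1)` plus the weights of these strictly lower bidders. Averaging over
`r`, the event `f_r(u) < f_r(w)` has probability at most `log₂†(w/u)`: it says that `log₂ u - r`
and `log₂ w - r` are separated by an integer.
-/

open Equiv

theorem Finset.sum_le_sum_range_card_of_antitone {M : Type*} [AddCommMonoid M] [PartialOrder M]
    [IsOrderedAddMonoid M] {f : ℕ → M} (hf : Antitone f) (s : Finset ℕ) :
    ∑ x ∈ s, f x ≤ ∑ j ∈ range #s, f j := by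
  induction s using Finset.induction_on_max with
  | empty => simp
  | insert a s ha ih =>
    have hs : #s ≤ a := by simpa using card_le_card fun x hx => mem_range.2 (ha x hx)
    rw [sum_insert fun h => (ha a h).false, card_insert_of_notMem fun h => (ha a h).false,
      sum_range_succ, add_comm]
    exact add_le_add ih (hf hs)

theorem forall_lt_mul_swap {α : Type*} [LinearOrder α] {σ : Perm α} {F : Finset α} {t t' : α}
    (ht : t ∈ F) (ht' : t' ∈ F) (h : ∀ j ∈ F, j ≠ t → σ j < σ t) :
    ∀ j ∈ F, j ≠ t' → (σ * swap t t') j < (σ * swap t t') t' := by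
  intro j hj hjt'
  rw [Perm.mul_apply, Perm.mul_apply, swap_apply_right]
  by_cases hjt : j = t
  · subst hjt
    rw [swap_apply_left]
    exact h t' ht' (Ne.symm hjt')
  · rw [swap_apply_of_ne_of_ne hjt hjt']
    exact h j hj hjt

/-- Ranking `insert i T` by a uniformly random permutation, each element is equally likely to
come out on top. -/
theorem card_filter_forall_lt_mul {α : Type*} [Fintype α] [LinearOrder α] {i : α}
    {T : Finset α} (hi : i ∉ T) :
    #{σ : Perm α | ∀ j ∈ T, σ j < σ i} * (#T + 1) = (Fintype.card α).factorial := by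
  set F := insert i T
  let E (t : α) : Finset (Perm α) := {σ | ∀ j ∈ F, j ≠ t → σ j < σ t}
  have hEi : ({σ : Perm α | ∀ j ∈ T, σ j < σ i} : Finset _) = E i := by
    refine Finset.filter_congr fun σ _ => ?_
    simp only [F, Finset.forall_mem_insert, ne_eq, not_true_eq_false, IsEmpty.forall_iff,
      true_and]
    exact forall₂_congr fun j hj => by simp [ne_of_mem_of_not_mem hj hi]
  have hle : ∀ t ∈ F, ∀ t' ∈ F, #(E t) ≤ #(E t') := fun t ht t' ht' =>
    card_le_card_of_injOn (· * swap t t')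
      (fun σ hσ => by simpa [E] using forall_lt_mul_swap ht ht' (by simpa [E] using hσ))
      (fun σ _ τ _ h => mul_right_cancel h)
  have hdisj : (F : Set α).PairwiseDisjoint E := fun t ht t' ht' hne =>
    Finset.disjoint_left.2 fun σ hσ hσ' => by
      simp only [E, Finset.mem_filter, Finset.mem_univ, true_and] at hσ hσ'
      exact (hσ t' ht' (Ne.symm hne)).asymm (hσ' t ht hne)
  have hcover : F.biUnion E = univ := Finset.eq_univ_of_forall fun σ => by
    obtain ⟨t, ht, hmax⟩ := F.exists_max_image σ ⟨i, mem_insert_self i T⟩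
    exact mem_biUnion.2 ⟨t, ht, by
      simpa [E] using fun j hj hjt => (hmax j hj).lt_of_ne (σ.injective.ne hjt)⟩
  rw [hEi, ← Fintype.card_perm, ← card_univ, ← hcover, card_biUnion hdisj,
    sum_congr rfl fun t ht => (hle t ht i (mem_insert_self i T)).antisymm
      (hle i (mem_insert_self i T) t ht),
    sum_const, smul_eq_mul, card_insert_of_notMem hi, mul_comm]

/-- The weight `1 / (j (j + 1))` of the `j`-th highest bidder, shifted to `0`-based `j`. -/
noncomputable def rankWeight (j : ℕ) : ℝ := 1 / (((j : ℝ) + 1) * ((j : ℝ) + 2))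

theorem rankWeight_nonneg (j : ℕ) : 0 ≤ rankWeight j := by
  unfold rankWeight
  positivity

theorem antitone_rankWeight : Antitone rankWeight := fun a b hab => by
  unfold rankWeight
  gcongr

theorem rankWeight_eq_sub (j : ℕ) : rankWeight j = 1 / ((j : ℝ) + 1) - 1 / ((j : ℝ) + 2) := by
  unfold rankWeight
  field_simp
  ring

theorem sum_range_rankWeight (m : ℕ) : ∑ j ∈ range m, rankWeight j = 1 - 1 / ((m : ℝ) + 1) := by
  rw [Finset.sum_congr rfl fun j _ => rankWeight_eq_sub j]
  convert Finset.sum_range_sub' (fun j : ℕ => 1 / ((j : ℝ) + 1)) m using 2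
  · push_cast
    ring
  · simp

/-- The weights outside `B` sum to at most those of the `#(range k \ B)` highest ranks. -/
theorem one_div_card_sdiff_add_one_le {k : ℕ} {B : Finset ℕ} (hB : B ⊆ range k) :
    1 / ((#(range k \ B) : ℝ) + 1) ≤ 1 / ((k : ℝ) + 1) + ∑ j ∈ B, rankWeight j := by
  have hsplit := sum_sdiff hB (f := rankWeight)
  have hcompl := (range k \ B).sum_le_sum_range_card_of_antitone antitone_rankWeight
  rw [sum_range_rankWeight] at hsplit hcompl
  linarith

theorem one_div_card_add_one_le_rankWeight {n k : ℕ} (hk : k ≤ n) (i : Fin n)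
    {T A : Finset (Fin n)}
    (hA : A ⊆ univ.filter fun j : Fin n => j.val < k ∧ j ≠ i)
    (hT : (univ.filter fun j : Fin n => j.val < k ∧ j ≠ i) \ A ⊆ T) :
    1 / ((#T : ℝ) + 1) ≤ rankWeight i + 1 / ((k : ℝ) + 1) + ∑ j ∈ A, rankWeight j := by
  have hiA : i ∉ A := fun h => by simpa using hA h
  set B : Finset ℕ := ({j ∈ insert i A | j.val < k}).map Fin.valEmbedding
  have hBk : B ⊆ range k := fun x hx => by
    obtain ⟨j, hj, rfl⟩ := mem_map.1 hx
    exact mem_range.2 (mem_filter.1 hj).2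
  have hcard : #(range k \ B) ≤ #T := by
    rw [← card_map Fin.valEmbedding]
    refine card_le_card fun x hx => ?_
    obtain ⟨hxk, hxB⟩ : x < k ∧ x ∉ B := by simpa using hx
    have hx : ∀ j ∈ insert i A, j.val ≠ x := fun j hj hjx =>
      hxB (mem_map.2 ⟨j, mem_filter.2 ⟨hj, hjx ▸ hxk⟩, hjx⟩)
    refine mem_map.2 ⟨⟨x, hxk.trans_le hk⟩, hT ?_, rfl⟩
    simp only [mem_sdiff, mem_filter, mem_univ, true_and]
    exact ⟨⟨hxk, fun h => hx i (mem_insert_self i A) (by rw [← h])⟩,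
      fun h => hx _ (mem_insert_of_mem h) rfl⟩
  have hsum : ∑ x ∈ B, rankWeight x ≤ rankWeight i + ∑ j ∈ A, rankWeight j := by
    rw [sum_map, ← sum_insert hiA (f := fun j : Fin n => rankWeight j)]
    exact sum_le_sum_of_subset_of_nonneg (filter_subset _ _) fun _ _ _ => rankWeight_nonneg _
  calc 1 / ((#T : ℝ) + 1) ≤ 1 / ((#(range k \ B) : ℝ) + 1) := by
        gcongr
    _ ≤ 1 / ((k : ℝ) + 1) + ∑ x ∈ B, rankWeight x := one_div_card_sdiff_add_one_le hBk
    _ ≤ _ := by linarith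

theorem fr_lt_fr_iff (r u w : ℝ) :
    fr r u < fr r w ↔ ⌊Real.logb 2 u - r⌋ < ⌊Real.logb 2 w - r⌋ := by
  rw [fr, fr, Real.rpow_lt_rpow_left_iff one_lt_two, add_lt_add_iff_left, Int.cast_lt]

theorem fr_le_fr (r : ℝ) {u w : ℝ} (hu : 0 < u) (h : u ≤ w) : fr r u ≤ fr r w := by
  rw [fr, fr, Real.rpow_le_rpow_left_iff one_lt_two, add_le_add_iff_left, Int.cast_le]
  exact Int.floor_le_floor (sub_le_sub_right (Real.logb_le_logb_of_le one_lt_two hu h) r)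

theorem fr_two_mul (r : ℝ) {w : ℝ} (hw : 0 < w) : fr r (2 * w) = 2 * fr r w := by
  have hlog : Real.logb 2 (2 * w) - r = (Real.logb 2 w - r) + 1 := by
    rw [Real.logb_mul two_ne_zero hw.ne', Real.logb_self_eq_one one_lt_two]
    ring
  rw [fr, fr, hlog, Int.floor_add_one, Int.cast_add, Int.cast_one, ← add_assoc,
    Real.rpow_add_one two_ne_zero, mul_comm]

theorem fr_lt_fr_two_mul (r : ℝ) {w : ℝ} (hw : 0 < w) : fr r w < fr r (2 * w) := by
  have : 0 < fr r w := Real.rpow_pos_of_pos two_pos _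
  rw [fr_two_mul r hw]
  linarith

theorem measurable_fr (w : ℝ) : Measurable fun r => fr r w := by
  unfold fr
  fun_prop

open Pointwise in
/-- `r` lies in the set iff some integer translate `r + m` lies in `Ioc b a`; as `Ioc 0 1` is a
fundamental domain for `ℤ`, the pieces of `Ioc b a` brought back to `Ioc 0 1` have total measure
`a - b`. -/
theorem volume_floor_sub_lt_floor_sub_le (a b : ℝ) :
    volume {r ∈ Set.Ico (0:ℝ) 1 | ⌊b - r⌋ < ⌊a - r⌋} ≤ ENNReal.ofReal (a - b) := by
  let G := AddSubgroup.zmultiples (1:ℝ)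
  calc volume {r ∈ Set.Ico (0:ℝ) 1 | ⌊b - r⌋ < ⌊a - r⌋}
      ≤ volume (insert (0:ℝ) (⋃ g : G, (g +ᵥ Set.Ioc b a) ∩ Set.Ioc 0 (0 + 1))) := by
        refine measure_mono ?_
        rintro r ⟨⟨hr0, hr1⟩, hlt⟩
        rcases hr0.eq_or_lt with rfl | hr0
        · exact Set.mem_insert _ _
        refine Set.mem_insert_of_mem _
          (Set.mem_iUnion.2 ⟨⟨-⌊a - r⌋, by simp [G]⟩, ?_, hr0, by simp [hr1.le]⟩)
        rw [AddSubgroup.vadd_def, Set.mem_vadd_set_iff_neg_vadd_mem]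
        have := Int.floor_lt.1 hlt
        simp only [vadd_eq_add, neg_neg, Set.mem_Ioc]
        constructor <;> linarith [Int.floor_le (a - r)]
    _ = volume (⋃ g : G, (g +ᵥ Set.Ioc b a) ∩ Set.Ioc 0 (0 + 1)) :=
        measure_congr (insert_ae_eq_self _ _)
    _ ≤ ∑' g : G, volume ((g +ᵥ Set.Ioc b a) ∩ Set.Ioc 0 (0 + 1)) := measure_iUnion_le _
    _ = ENNReal.ofReal (a - b) :=
        ((isAddFundamentalDomain_Ioc one_pos 0).measure_eq_tsum _).symm.trans Real.volume_Ioc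

theorem measureReal_fr_lt_fr_le {u w : ℝ} (hu : 0 < u) (hw : 0 < w) :
    (volume.restrict (Set.Ico (0:ℝ) 1)).real {r | fr r u < fr r w} ≤ logdag (w / u) := by
  refine ENNReal.toReal_le_of_le_ofReal (le_max_left _ _) ?_
  rw [Measure.restrict_apply' measurableSet_Ico, logdag, Real.logb_div hw.ne' hu.ne',
    ENNReal.ofReal_max, ENNReal.ofReal_zero, zero_max, ENNReal.ofReal_min, ENNReal.ofReal_one]
  refine le_min ((measure_mono Set.inter_subset_right).trans (by simp)) ?_
  simp_rw [fr_lt_fr_iff]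
  rw [Set.inter_comm]
  exact volume_floor_sub_lt_floor_sub_le _ _

theorem sum_measureReal_eq_integral_card {α ι : Type*} [MeasurableSpace α] {μ : Measure α}
    [IsFiniteMeasure μ] (s : Finset ι) (p : ι → α → Prop) [∀ i x, Decidable (p i x)]
    (hp : ∀ i ∈ s, MeasurableSet {x | p i x}) :
    ∑ i ∈ s, μ.real {x | p i x} = ∫ x, (#{i ∈ s | p i x} : ℝ) ∂μ := by
  rw [Finset.sum_congr rfl fun i hi => (integral_indicator_one (hp i hi)).symm,
    ← integral_finsetSum _ fun i hi => (integrable_const 1).indicator (hp i hi)]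
  congr 1 with x
  rw [← Finset.sum_boole]
  exact Finset.sum_congr rfl fun i _ => by simp [Set.indicator_apply]

theorem integrable_add_mul_indicator_add_sum {α ι : Type*} [MeasurableSpace α] {μ : Measure α}
    [IsFiniteMeasure μ] (a b : ℝ) {W : Set α} (hW : MeasurableSet W) (D : Finset ι) (c : ι → ℝ)
    {E : ι → Set α} (hE : ∀ j, MeasurableSet (E j)) :
    Integrable (fun x => a + b * W.indicator 1 x + ∑ j ∈ D, c j * (E j).indicator 1 x) μ :=
  ((integrable_const a).add (((integrable_const 1).indicator hW).const_mul b)).add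
    (integrable_finsetSum _ fun j _ => ((integrable_const 1).indicator (hE j)).const_mul (c j))

theorem integral_add_mul_indicator_add_sum {α ι : Type*} [MeasurableSpace α] {μ : Measure α}
    [IsProbabilityMeasure μ] (a b : ℝ) {W : Set α} (hW : MeasurableSet W) (D : Finset ι)
    (c : ι → ℝ) {E : ι → Set α} (hE : ∀ j, MeasurableSet (E j)) :
    ∫ x, (a + b * W.indicator 1 x + ∑ j ∈ D, c j * (E j).indicator 1 x) ∂μ
      = a + b * μ.real W + ∑ j ∈ D, c j * μ.real (E j) := by
  have hWi : Integrable (W.indicator (1 : α → ℝ)) μ := (integrable_const 1).indicator hW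
  have hEi (j : ι) : Integrable ((E j).indicator (1 : α → ℝ)) μ :=
    (integrable_const 1).indicator (hE j)
  rw [integral_add (f := fun x => a + b * W.indicator 1 x)
      ((integrable_const a).add (hWi.const_mul b))
      (integrable_finsetSum _ fun j _ => (hEi j).const_mul (c j)),
    integral_add (f := fun _ => a) (integrable_const a) (hWi.const_mul b),
    integral_finsetSum _ fun j _ => (hEi j).const_mul (c j)]
  simp only [integral_const, probReal_univ, one_smul, integral_const_mul,
    integral_indicator_one hW, integral_indicator_one (hE _)]

section Auction

variable {n : ℕ} {S : Fin n → Type*} [∀ i, Nonempty (S i)]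

theorem lowEst_le {w : ((i : Fin n) → S i) → ℝ} (hw : ∀ t, 0 ≤ w t) (s : (i : Fin n) → S i)
    (i : Fin n) : lowEst w s i ≤ w s :=
  csInf_le ⟨0, fun _ ⟨_, ho⟩ => ho ▸ hw _⟩ ⟨s i, by simp⟩

theorem measurableSet_lexGt (π : Equiv.Perm (Fin n)) (i j : Fin n) {a b : ℝ → ℝ}
    (ha : Measurable a) (hb : Measurable b) : MeasurableSet {r | lexGt π i j (a r) (b r)} :=
  (measurableSet_lt hb ha).union ((measurableSet_eq_fun ha hb).inter (MeasurableSet.const _))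

theorem measurableSet_isCandidate (v : Fin n → ((i : Fin n) → S i) → ℝ)
    (s : (i : Fin n) → S i) (π : Equiv.Perm (Fin n)) (i : Fin n) :
    MeasurableSet {r : ℝ | IsCandidate v s r π i} := by
  simp only [IsCandidate, Set.ofPred_forall]
  exact .iInter fun j => .iInter fun _ =>
    measurableSet_lexGt π i j (measurable_fr _) (measurable_fr _)

noncomputable instance (v : Fin n → ((i : Fin n) → S i) → ℝ) (s : (i : Fin n) → S i) (r : ℝ)
    (π : Equiv.Perm (Fin n)) (i : Fin n) : Decidable (IsCandidate v s r π i) := by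
  unfold IsCandidate
  infer_instance

theorem ecand_eq_integral (v : Fin n → ((i : Fin n) → S i) → ℝ) (s : (i : Fin n) → S i)
    (i : Fin n) :
    Ecand v s i = ∫ r, (#{π | IsCandidate v s r π i} : ℝ) / n.factorial
      ∂(volume.restrict (Set.Ico (0:ℝ) 1)) := by
  rw [Ecand, integral_div, ← sum_measureReal_eq_integral_card _ _
    fun π _ => measurableSet_isCandidate v s π i, inv_mul_eq_div]
  congr 1
  refine Finset.sum_congr rfl fun π _ => ?_
  rw [measureReal_restrict_apply' measurableSet_Ico, Set.inter_comm]
  rfl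

/-- If no `f_r(low_j^i)` exceeds `f_r(v_i(s))`, bidder `i` is a candidate exactly when `π` ranks
it above every bidder `j` with `f_r(low_j^i) = f_r(v_i(s))`. -/
theorem card_isCandidate_mul_card_ties_add_one (v : Fin n → ((i : Fin n) → S i) → ℝ)
    (s : (i : Fin n) → S i) {i : Fin n} {r : ℝ}
    (hG : ∀ j ≠ i, fr r (lowEst (v j) s i) ≤ fr r (v i s)) :
    #{π | IsCandidate v s r π i}
      * (#{j | j ≠ i ∧ fr r (v i s) = fr r (lowEst (v j) s i)} + 1) = n.factorial := by
  set T : Finset (Fin n) := {j | j ≠ i ∧ fr r (v i s) = fr r (lowEst (v j) s i)}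
  have hfilter : univ.filter (fun π => IsCandidate v s r π i)
      = univ.filter (fun π : Perm (Fin n) => ∀ j ∈ T, π j < π i) := by
    ext π
    simp only [mem_filter, mem_univ, true_and]
    refine ⟨fun hπ j hj => ?_, fun hπ j hji => ?_⟩
    · obtain ⟨hji, heq⟩ := by simpa [T] using hj
      exact ((hπ j hji).resolve_left heq.symm.not_lt).2
    · rcases (hG j hji).lt_or_eq with hlt | heq
      · exact .inl hlt
      · exact .inr ⟨heq.symm, hπ j (by simp [T, hji, heq])⟩
  rw [hfilter]
  convert card_filter_forall_lt_mul (i := i) (T := T) (by simp [T])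
  exact (Fintype.card_fin n).symm

theorem card_isCandidate_eq_zero (v : Fin n → ((i : Fin n) → S i) → ℝ) (s : (i : Fin n) → S i)
    {i j : Fin n} {r : ℝ} (hji : j ≠ i) (hlt : fr r (v i s) < fr r (lowEst (v j) s i)) :
    #{π | IsCandidate v s r π i} = 0 :=
  card_eq_zero.2 <| filter_eq_empty_iff.2 fun _ _ hπ =>
    (hπ j hji).elim hlt.asymm fun h => (h.1 ▸ hlt).false

theorem card_isCandidate_div_le (v : Fin n → ((i : Fin n) → S i) → ℝ) (s : (i : Fin n) → S i)
    {i : Fin n} (hnonneg : ∀ t, 0 ≤ v i t) (hpos : 0 < v i s) (hlowpos : 0 < lowEst (v i) s i)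
    {k : ℕ} (hk : k ≤ n) (z : Fin n) (r : ℝ) :
    (#{π | IsCandidate v s r π i} : ℝ) / n.factorial
      ≤ rankWeight i
        + 1 / ((k : ℝ) + 1) * {x | fr x (lowEst (v z) s i) < fr x (2 * v i s)}.indicator 1 r
        + ∑ j ∈ univ.filter (fun j : Fin n => j.val < k ∧ j ≠ i),
            rankWeight j * {x | fr x (lowEst (v j) s i) < fr x (v i s)}.indicator 1 r := by
  by_cases hG : ∀ j ≠ i, fr r (lowEst (v j) s i) ≤ fr r (v i s)
  · set T : Finset (Fin n) := {j | j ≠ i ∧ fr r (v i s) = fr r (lowEst (v j) s i)}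
    have hcand : (#{π | IsCandidate v s r π i} : ℝ) / n.factorial = 1 / ((#T : ℝ) + 1) := by
      rw [div_eq_div_iff (by positivity) (by positivity), one_mul,
        ← card_isCandidate_mul_card_ties_add_one v s hG]
      push_cast
      rfl
    have hW : fr r (lowEst (v z) s i) < fr r (2 * v i s) := by
      refine lt_of_le_of_lt ?_ (fr_lt_fr_two_mul r hpos)
      rcases eq_or_ne z i with rfl | hzi
      · exact fr_le_fr r hlowpos (lowEst_le hnonneg s z)
      · exact hG z hzi
    have hbound := one_div_card_add_one_le_rankWeight hk i (T := T)
      (filter_subset (fun j => fr r (lowEst (v j) s i) < fr r (v i s)) _) fun j hj => by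
        simp only [mem_sdiff, mem_filter, mem_univ, true_and, not_and, not_lt] at hj
        simpa [T, hj.1.2] using ((hG j hj.1.2).antisymm (hj.2 hj.1)).symm
    simpa [hcand, hW, Set.indicator_apply, Finset.sum_filter] using hbound
  · obtain ⟨j, hji, hlt⟩ : ∃ j ≠ i, fr r (v i s) < fr r (lowEst (v j) s i) := by simpa using hG
    rw [card_isCandidate_eq_zero v s hji hlt, Nat.cast_zero, zero_div]
    have hind (E : Set ℝ) : 0 ≤ E.indicator (1 : ℝ → ℝ) r :=
      Set.indicator_nonneg (fun _ _ => zero_le_one) r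
    exact add_nonneg (add_nonneg (rankWeight_nonneg i) (mul_nonneg (by positivity) (hind _)))
      (sum_nonneg fun j _ => mul_nonneg (rankWeight_nonneg j) (hind _))

end Auction

/-- Bidder `i` here is bidder `i.val + 1` of the paper. -/
theorem candidate_probability_bound_general {n : ℕ} {S : Fin n → Type*} [∀ i, Nonempty (S i)]
    (hn : 0 < n)
    (v : Fin n → ((i : Fin n) → S i) → ℝ)
    (hnonneg : ∀ j s, 0 ≤ v j s)
    (s : (i : Fin n) → S i)
    (hpos : ∀ i, 0 < v i s)
    (hlowpos : ∀ j i, 0 < lowEst (v j) s i)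
    (k : ℕ) (hk : k ≤ n)
    (i : Fin n) :
    Ecand v s i
      ≤ 1 / (((i.val : ℝ) + 1) * ((i.val : ℝ) + 2))
        + logdag (2 * v i s / lowEst (v ⟨0, hn⟩) s i) / ((k : ℝ) + 1)
        + ∑ j ∈ Finset.univ.filter (fun j : Fin n => j.val < k ∧ j ≠ i),
            logdag (v i s / lowEst (v j) s i) / (((j.val : ℝ) + 1) * ((j.val : ℝ) + 2)) := by
  set P := volume.restrict (Set.Ico (0:ℝ) 1)
  set W := {x : ℝ | fr x (lowEst (v ⟨0, hn⟩) s i) < fr x (2 * v i s)}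
  set E := fun j => {x : ℝ | fr x (lowEst (v j) s i) < fr x (v i s)}
  have hW : MeasurableSet W := measurableSet_lt (measurable_fr _) (measurable_fr _)
  have hE (j : Fin n) : MeasurableSet (E j) := measurableSet_lt (measurable_fr _) (measurable_fr _)
  have : IsProbabilityMeasure P := ⟨by simp [P]⟩
  calc Ecand v s i = ∫ r, (#{π | IsCandidate v s r π i} : ℝ) / n.factorial ∂P :=
        ecand_eq_integral v s i
    _ ≤ ∫ r, (rankWeight i + 1 / ((k : ℝ) + 1) * W.indicator 1 r
          + ∑ j ∈ univ.filter (fun j : Fin n => j.val < k ∧ j ≠ i),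
              rankWeight j * (E j).indicator 1 r) ∂P :=
        integral_mono_of_nonneg (ae_of_all _ fun r => by positivity)
          (integrable_add_mul_indicator_add_sum _ _ hW _ _ hE)
          (ae_of_all _ fun r => card_isCandidate_div_le v s (hnonneg i) (hpos i) (hlowpos i i)
            hk ⟨0, hn⟩ r)
    _ = rankWeight i + 1 / ((k : ℝ) + 1) * P.real W
          + ∑ j ∈ univ.filter (fun j : Fin n => j.val < k ∧ j ≠ i), rankWeight j * P.real (E j) :=
        integral_add_mul_indicator_add_sum _ _ hW _ _ hE
    _ ≤ _ := by
        simp only [rankWeight, one_div_mul_eq_div]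
        gcongr with j
        · exact measureReal_fr_lt_fr_le (hlowpos _ i) (by linarith [hpos i])
        · exact measureReal_fr_lt_fr_le (hlowpos j i) (hpos i)

/-- Candidate-probability bound.  Bidders are indexed by `Fin n` (bidder `i` plays
the role of the 1-indexed bidder `i.val + 1`), sorted in nonincreasing order of
value, and `k` is the number of bidders whose value exceeds half the highest. -/
theorem candidate_probability_bound {n : ℕ} {S : Fin n → Type*} [∀ i, Nonempty (S i)]
    (hn : 0 < n)
    (v : Fin n → ((i : Fin n) → S i) → ℝ)
    (hnonneg : ∀ j s, 0 ≤ v j s)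
    (s : (i : Fin n) → S i)
    (hsorted : ∀ i j : Fin n, i ≤ j → v j s ≤ v i s)
    (hpos : ∀ i, 0 < v i s)
    (hlowpos : ∀ j i, 0 < lowEst (v j) s i)
    (k : ℕ) (hk : k ≤ n)
    (hkdef : ∀ i : Fin n, (i.val < k ↔ v ⟨0, hn⟩ s / 2 < v i s))
    (i : Fin n) :
    Ecand v s i
      ≤ 1 / (((i.val : ℝ) + 1) * ((i.val : ℝ) + 2))
        + logdag (2 * v i s / lowEst (v ⟨0, hn⟩) s i) / ((k : ℝ) + 1)
        + ∑ j ∈ Finset.univ.filter (fun j : Fin n => j.val < k ∧ j ≠ i),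
            logdag (v i s / lowEst (v j) s i) / (((j.val : ℝ) + 1) * ((j.val : ℝ) + 2)) :=
  candidate_probability_bound_general hn v hnonneg s hpos hlowpos k hk i
end

section
/- Generalized Birkhoff decomposition: let 𝓜 be the set of n×m real matrices M with all entries nonnegative, every row sum at most 1, and every column sum at most 1. Then every matrix in 𝓜 lies in the convex hull of the matrices in 𝓜 all of whose entries are in {0,1}. -/
open Finset

/-- Generalized Birkhoff decomposition: every `n × m` matrix with nonnegative entries
whose row sums and column sums are all at most 1 lies in the convex hull of the
`{0,1}`-matrices with the same property (partial permutation matrices). -/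
theorem generalized_birkhoff {n m : ℕ} (M : Matrix (Fin n) (Fin m) ℝ)
    (hnonneg : ∀ i j, 0 ≤ M i j)
    (hrow : ∀ i, ∑ j, M i j ≤ 1)
    (hcol : ∀ j, ∑ i, M i j ≤ 1) :
    M ∈ convexHull ℝ {A : Matrix (Fin n) (Fin m) ℝ |
      (∀ i j, A i j = 0 ∨ A i j = 1) ∧
      (∀ i, ∑ j, A i j ≤ 1) ∧
      (∀ j, ∑ i, A i j ≤ 1)} := by
  classical
  -- the extended square matrix on `Fin n ⊕ Fin m`
  set N : Matrix (Fin n ⊕ Fin m) (Fin n ⊕ Fin m) ℝ := fun r c =>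
    match r, c with
    | Sum.inl i, Sum.inr j => M i j
    | Sum.inl i, Sum.inl i' => if i = i' then 1 - ∑ j, M i j else 0
    | Sum.inr j, Sum.inr j' => if j = j' then 1 - ∑ i, M i j else 0
    | Sum.inr j, Sum.inl i => M i j
    with hN
  have hNds : N ∈ doublyStochastic ℝ (Fin n ⊕ Fin m) := by
    rw [mem_doublyStochastic_iff_sum]
    refine ⟨?_, ?_, ?_⟩
    · rintro (i | j) (i' | j') <;> simp only [hN]
      · split <;> simp [sub_nonneg, hrow i]
      · exact hnonneg i j'
      · exact hnonneg i' j
      · split <;> simp [sub_nonneg, hcol j]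
    · rintro (i | j) <;> simp [hN, Fintype.sum_sum_type]
    · rintro (i | j) <;> simp [hN, Fintype.sum_sum_type]
  -- the linear map taking the top-right block
  let Φ : Matrix (Fin n ⊕ Fin m) (Fin n ⊕ Fin m) ℝ →ₗ[ℝ] Matrix (Fin n) (Fin m) ℝ :=
    { toFun := fun A => fun i j => A (Sum.inl i) (Sum.inr j)
      map_add' := fun A B => rfl
      map_smul' := fun c A => rfl }
  have hΦN : Φ N = M := rfl
  rw [← SetLike.mem_coe, doublyStochastic_eq_convexHull_permMatrix] at hNds
  have : Φ N ∈ Φ '' (convexHull ℝ {σ.permMatrix ℝ | σ : Equiv.Perm (Fin n ⊕ Fin m)}) :=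
    Set.mem_image_of_mem _ hNds
  rw [Φ.image_convexHull] at this
  rw [← hΦN]
  refine convexHull_mono ?_ this
  rintro A ⟨B, ⟨σ, rfl⟩, rfl⟩
  have hperm : ∀ r c, (σ.permMatrix ℝ) r c = if σ r = c then (1:ℝ) else 0 := by
    intro r c
    simp [Equiv.Perm.permMatrix, PEquiv.toMatrix, Equiv.toPEquiv_apply]
  refine ⟨fun i j => ?_, fun i => ?_, fun j => ?_⟩
  · show (σ.permMatrix ℝ) (Sum.inl i) (Sum.inr j) = 0 ∨
        (σ.permMatrix ℝ) (Sum.inl i) (Sum.inr j) = 1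
    rw [hperm]; split <;> simp
  · show ∑ j, (σ.permMatrix ℝ) (Sum.inl i) (Sum.inr j) ≤ 1
    simp only [hperm]
    rcases h : σ (Sum.inl i) with i' | j'
    · rw [Finset.sum_eq_zero (fun j _ => by simp [h])]; norm_num
    · rw [Finset.sum_eq_single j' (fun b _ hb => by simp [h, Ne.symm hb]) (by simp)]
      simp
  · show ∑ i, (σ.permMatrix ℝ) (Sum.inl i) (Sum.inr j) ≤ 1
    simp only [hperm]
    rcases h : σ.symm (Sum.inr j) with i' | j'
    · rw [Finset.sum_eq_single i' (fun b _ hb => ?_) (by simp)]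
      · simp [← h]
      · have : σ (Sum.inl b) ≠ Sum.inr j := fun hc => hb (Sum.inl.inj (by
          rw [← Equiv.symm_apply_apply σ (Sum.inl b), hc, h]))
        simp [this]
    · rw [Finset.sum_eq_zero (fun b _ => ?_)]; · norm_num
      have : σ (Sum.inl b) ≠ Sum.inr j := fun hc => by
        have := congrArg σ.symm hc; rw [Equiv.symm_apply_apply, h] at this; exact absurd this (by simp)
      simp [this]
end

section
/- Generalized Kőnig covering lemma: let M be an n×m matrix of nonnegative reals that is not identically zero. Define the degree of row i as d_i := ∑_j M_{ij}, the degree of column j as e_j := ∑_i M_{ij}, and Δ := the maximum over all row and column degrees. Then there exists a set P of cells (i,j) with M_{ij} > 0 for all (i,j) ∈ P, such that no two cells of P share a row or a column, every row i with d_i = Δ appears in some cell of P, and every column j with e_j = Δ appears in some cell of P. -/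
open Finset

lemma hall_perm {α β : Type*} [Fintype α] [Fintype β] [DecidableEq α] [DecidableEq β]
    (hcard : Fintype.card α = Fintype.card β)
    (N : α → β → ℝ) (hnn : ∀ x y, 0 ≤ N x y) (Δ : ℝ) (hΔ : 0 < Δ)
    (hrow : ∀ x, ∑ y, N x y = Δ) (hcol : ∀ y, ∑ x, N x y = Δ) :
    ∃ f : α → β, Function.Bijective f ∧ ∀ x, 0 < N x (f x) := by
  set t : α → Finset β := fun x => univ.filter (fun y => 0 < N x y) with ht
  have hall : ∀ s : Finset α, s.card ≤ (s.biUnion t).card := by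
    intro s
    have key : Δ * s.card ≤ Δ * (s.biUnion t).card := by
      have h1 : Δ * s.card = ∑ x ∈ s, ∑ y ∈ s.biUnion t, N x y := by
        rw [mul_comm, ← nsmul_eq_mul, ← Finset.sum_const]
        refine Finset.sum_congr rfl fun x hx => ?_
        rw [← hrow x]
        refine (Finset.sum_subset (Finset.subset_univ _) fun y _ hy => ?_).symm
        by_contra hne
        exact hy (Finset.mem_biUnion.mpr ⟨x, hx, Finset.mem_filter.mpr ⟨mem_univ _,
          lt_of_le_of_ne (hnn x y) (Ne.symm hne)⟩⟩)
      have h2 : ∑ x ∈ s, ∑ y ∈ s.biUnion t, N x y ≤ Δ * (s.biUnion t).card := by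
        rw [Finset.sum_comm, mul_comm, ← nsmul_eq_mul, ← Finset.sum_const]
        refine Finset.sum_le_sum fun y _ => ?_
        rw [← hcol y]
        exact Finset.sum_le_sum_of_subset_of_nonneg (Finset.subset_univ _)
          (fun x _ _ => hnn x y)
      linarith
    exact_mod_cast le_of_mul_le_mul_left key hΔ
  obtain ⟨f, hinj, hf⟩ := (Finset.all_card_le_biUnion_card_iff_exists_injective t).mp hall
  refine ⟨f, (Fintype.bijective_iff_injective_and_card f).mpr ⟨hinj, hcard⟩, fun x => ?_⟩
  exact (Finset.mem_filter.mp (hf x)).2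

/-- Generalized Kőnig covering lemma: in a nonnegative matrix that is not identically
zero, viewed as a weighted bipartite graph, there is a matching (a set of positive
cells, no two sharing a row or column) covering every row and every column of
maximum degree, where the degree of a row (resp. column) is its sum of entries and
`Δ` is the maximum over all row and column degrees. -/
theorem generalized_konig_cover {n m : ℕ} (hn : 0 < n) (hm : 0 < m)
    (M : Matrix (Fin n) (Fin m) ℝ)
    (hnonneg : ∀ i j, 0 ≤ M i j)
    (hne : ∃ i j, M i j ≠ 0) :
    ∃ P : Finset (Fin n × Fin m),
      (∀ p ∈ P, 0 < M p.1 p.2) ∧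
      (∀ p ∈ P, ∀ q ∈ P, p ≠ q → p.1 ≠ q.1 ∧ p.2 ≠ q.2) ∧
      (∀ i : Fin n,
        (∑ j, M i j) =
          max (Finset.univ.sup' ⟨⟨0, hn⟩, Finset.mem_univ _⟩ fun i' : Fin n => ∑ j, M i' j)
              (Finset.univ.sup' ⟨⟨0, hm⟩, Finset.mem_univ _⟩ fun j' : Fin m => ∑ i', M i' j')
        → ∃ p ∈ P, p.1 = i) ∧
      (∀ j : Fin m,
        (∑ i, M i j) =
          max (Finset.univ.sup' ⟨⟨0, hn⟩, Finset.mem_univ _⟩ fun i' : Fin n => ∑ j', M i' j')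
              (Finset.univ.sup' ⟨⟨0, hm⟩, Finset.mem_univ _⟩ fun j' : Fin m => ∑ i', M i' j')
        → ∃ p ∈ P, p.2 = j) := by
  set d : Fin n → ℝ := fun i => ∑ j, M i j with hd
  set e : Fin m → ℝ := fun j => ∑ i, M i j with he
  set Δ : ℝ := max (Finset.univ.sup' ⟨⟨0, hn⟩, Finset.mem_univ _⟩ fun i' : Fin n => ∑ j, M i' j)
      (Finset.univ.sup' ⟨⟨0, hm⟩, Finset.mem_univ _⟩ fun j' : Fin m => ∑ i', M i' j') with hΔdef
  have hdΔ : ∀ i, d i ≤ Δ := fun i =>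
    le_trans (Finset.le_sup' _ (mem_univ i)) (le_max_left _ _)
  have heΔ : ∀ j, e j ≤ Δ := fun j =>
    le_trans (Finset.le_sup' _ (mem_univ j)) (le_max_right _ _)
  have hΔpos : 0 < Δ := by
    obtain ⟨i, j, hij⟩ := hne
    have h1 : 0 < M i j := lt_of_le_of_ne (hnonneg i j) (Ne.symm hij)
    have h2 : M i j ≤ d i := Finset.single_le_sum (fun j' _ => hnonneg i j') (mem_univ j)
    exact lt_of_lt_of_le h1 (le_trans h2 (hdΔ i))
  set N : Fin n ⊕ Fin m → Fin m ⊕ Fin n → ℝ := fun x y =>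
    match x, y with
    | .inl i, .inl j => M i j
    | .inl i, .inr i' => if i = i' then Δ - d i else 0
    | .inr j, .inl j' => if j = j' then Δ - e j else 0
    | .inr j, .inr i => M i j
    with hN
  have hnn : ∀ x y, 0 ≤ N x y := by
    rintro (i | j) (j' | i')
    · exact hnonneg i j'
    · simp only [hN]
      split
      · linarith [hdΔ i]
      · exact le_rfl
    · simp only [hN]
      split
      · linarith [heΔ j]
      · exact le_rfl
    · exact hnonneg i' j
  have hrow : ∀ x, ∑ y, N x y = Δ := by
    rintro (i | j)
    · rw [Fintype.sum_sum_type]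
      have : ∑ i' : Fin n, N (.inl i) (.inr i') = Δ - d i := by
        simp only [hN, Finset.sum_ite_eq, mem_univ, if_true]
      simp only [this]
      have : ∑ j' : Fin m, N (.inl i) (.inl j') = d i := rfl
      rw [this]; ring
    · rw [Fintype.sum_sum_type]
      have h1 : ∑ j' : Fin m, N (.inr j) (.inl j') = Δ - e j := by
        simp only [hN, Finset.sum_ite_eq, mem_univ, if_true]
      have h2 : ∑ i' : Fin n, N (.inr j) (.inr i') = e j := rfl
      rw [h1, h2]; ring
  have hcol : ∀ y, ∑ x, N x y = Δ := by
    rintro (j | i)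
    · rw [Fintype.sum_sum_type]
      have h1 : ∑ i : Fin n, N (.inl i) (.inl j) = e j := rfl
      have h2 : ∑ j' : Fin m, N (.inr j') (.inl j) = Δ - e j := by
        simp only [hN, Finset.sum_ite_eq', mem_univ, if_true]
      rw [h1, h2]; ring
    · rw [Fintype.sum_sum_type]
      have h1 : ∑ i' : Fin n, N (.inl i') (.inr i) = Δ - d i := by
        simp only [hN, Finset.sum_ite_eq', mem_univ, if_true]
      have h2 : ∑ j : Fin m, N (.inr j) (.inr i) = d i := rfl
      rw [h1, h2]; ring
  have hcard : Fintype.card (Fin n ⊕ Fin m) = Fintype.card (Fin m ⊕ Fin n) := by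
    simp [Nat.add_comm]
  obtain ⟨f, hbij, hpos⟩ := hall_perm hcard N hnn Δ hΔpos hrow hcol
  refine ⟨Finset.univ.filter (fun p : Fin n × Fin m => f (.inl p.1) = .inl p.2),
    ?_, ?_, ?_, ?_⟩
  · intro p hp
    have := hpos (.inl p.1)
    rw [(Finset.mem_filter.mp hp).2] at this
    exact this
  · intro p hp q hq hpq
    have hp' := (Finset.mem_filter.mp hp).2
    have hq' := (Finset.mem_filter.mp hq).2
    constructor
    · intro h1
      apply hpq
      have : (Sum.inl p.2 : Fin m ⊕ Fin n) = .inl q.2 := by rw [← hp', ← hq', h1]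
      exact Prod.ext h1 (Sum.inl.inj this)
    · intro h2
      apply hpq
      have : f (.inl p.1) = f (.inl q.1) := by rw [hp', hq', h2]
      exact Prod.ext (Sum.inl.inj (hbij.1 this)) h2
  · intro i hi
    have hdi : d i = Δ := hi
    have := hpos (.inl i)
    match hfi : f (.inl i) with
    | .inl j => exact ⟨(i, j), Finset.mem_filter.mpr ⟨mem_univ _, hfi⟩, rfl⟩
    | .inr i' =>
      rw [hfi] at this
      simp only [hN] at this
      split at this <;> [linarith [hdi ▸ this]; linarith]
  · intro j hj
    have hej : e j = Δ := hj
    obtain ⟨x, hx⟩ := hbij.2 (.inl j)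
    match x, hx with
    | .inl i, hx => exact ⟨(i, j), Finset.mem_filter.mpr ⟨mem_univ _, hx⟩, rfl⟩
    | .inr j', hx =>
      have := hpos (.inr j')
      rw [hx] at this
      simp only [hN] at this
      split at this <;> rename_i h
      · rw [h, hej] at this; linarith
      · linarith
end

section
/- Multi-unit feasibility bound for the B-terms: let 1 ≤ m ≤ n, let w_1 ≥ w_2 ≥ ⋯ ≥ w_n > 0 be real numbers, and let k := max{ i : w_i > w_m/2 }. Then ∑_{i=m}^{k} ∑_{j=1}^{k} (m / (j(j+1))) · log₂†( w_i / w_j ) ≤ m. -/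
open Finset

/-- Key inductive inequality (Abel-summation style invariant). -/
lemma multi_unit_aux (m : ℕ) (hm : 1 ≤ m) (x : ℕ → ℝ) (k : ℕ) (hk : m ≤ k)
    (hmono : ∀ i j : ℕ, m ≤ i → i ≤ j → j ≤ k → x j ≤ x i) :
    (∑ i ∈ Finset.Icc m k, ∑ j ∈ Finset.Icc 1 k,
        (1 / ((j : ℝ) * ((j : ℝ) + 1))) * (if i < j then x i - x j else 0))
      + (1 / ((k : ℝ) + 1)) * ∑ i ∈ Finset.Icc m k, (x i - x k)
      ≤ x m - x k := by
  induction k, hk using Nat.le_induction with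
  | base =>
    have h1 : (∑ i ∈ Finset.Icc m m, ∑ j ∈ Finset.Icc 1 m,
        (1 / ((j : ℝ) * ((j : ℝ) + 1))) * (if i < j then x i - x j else 0)) = 0 := by
      refine Finset.sum_eq_zero fun i hi => Finset.sum_eq_zero fun j hj => ?_
      simp only [Finset.mem_Icc] at hi hj
      rw [if_neg (by omega), mul_zero]
    have h2 : (∑ i ∈ Finset.Icc m m, (x i - x m)) = 0 := by
      simp
    rw [h1, h2]
    simp
  | succ k hk IH =>
    have hmono' : ∀ i j : ℕ, m ≤ i → i ≤ j → j ≤ k → x j ≤ x i :=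
      fun i j hi hij hjk => hmono i j hi hij (by omega)
    have IH' := IH hmono'
    -- abbreviations
    set D : ℝ := ∑ i ∈ Finset.Icc m k, ∑ j ∈ Finset.Icc 1 k,
        (1 / ((j : ℝ) * ((j : ℝ) + 1))) * (if i < j then x i - x j else 0) with hD
    set B : ℝ := ∑ i ∈ Finset.Icc m k, (x i - x k) with hB
    set B' : ℝ := ∑ i ∈ Finset.Icc m k, (x i - x (k + 1)) with hB'
    -- rewrite the double sum at k+1
    have e1 : (∑ i ∈ Finset.Icc m (k + 1), ∑ j ∈ Finset.Icc 1 (k + 1),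
        (1 / ((j : ℝ) * ((j : ℝ) + 1))) * (if i < j then x i - x j else 0))
        = D + (1 / (((k : ℝ) + 1) * ((k : ℝ) + 2))) * B' := by
      have step1 : ∀ i ∈ Finset.Icc m (k + 1),
          (∑ j ∈ Finset.Icc 1 (k + 1),
            (1 / ((j : ℝ) * ((j : ℝ) + 1))) * (if i < j then x i - x j else 0))
          = (∑ j ∈ Finset.Icc 1 k,
              (1 / ((j : ℝ) * ((j : ℝ) + 1))) * (if i < j then x i - x j else 0))
            + (1 / (((k : ℝ) + 1) * ((k : ℝ) + 2))) * (if i < k + 1 then x i - x (k + 1) else 0) := by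
        intro i _
        rw [Finset.sum_Icc_succ_top (by omega : 1 ≤ k + 1)]
        congr 2
        push_cast
        ring
      rw [Finset.sum_congr rfl step1, Finset.sum_add_distrib]
      congr 1
      · rw [Finset.sum_Icc_succ_top (by omega : m ≤ k + 1)]
        have : (∑ j ∈ Finset.Icc 1 k,
            (1 / ((j : ℝ) * ((j : ℝ) + 1))) * (if k + 1 < j then x (k + 1) - x j else 0)) = 0 := by
          refine Finset.sum_eq_zero fun j hj => ?_
          simp only [Finset.mem_Icc] at hj
          rw [if_neg (by omega), mul_zero]
        rw [this, add_zero]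
      · rw [Finset.sum_Icc_succ_top (by omega : m ≤ k + 1), if_neg (lt_irrefl _),
          mul_zero, add_zero, ← Finset.mul_sum]
        congr 1
        refine Finset.sum_congr rfl fun i hi => ?_
        simp only [Finset.mem_Icc] at hi
        rw [if_pos (by omega)]
    have e2 : (∑ i ∈ Finset.Icc m (k + 1), (x i - x (k + 1))) = B' := by
      rw [Finset.sum_Icc_succ_top (by omega : m ≤ k + 1)]
      simp [hB']
    rw [e1]
    push_cast
    rw [e2]
    have hc2 : ((k : ℝ) + 1 + 1) = (k : ℝ) + 2 := by ring
    rw [hc2]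
    -- relate B' and B
    have hcard : ((Finset.Icc m k).card : ℝ) = (k : ℝ) + 1 - (m : ℝ) := by
      rw [Nat.card_Icc]
      push_cast [Nat.cast_sub (by omega : m ≤ k + 1)]
      ring
    have eB' : B' = B + ((k : ℝ) + 1 - (m : ℝ)) * (x k - x (k + 1)) := by
      rw [hB', hB]
      have : ∀ i ∈ Finset.Icc m k, x i - x (k + 1) = (x i - x k) + (x k - x (k + 1)) := by
        intro i _; ring
      rw [Finset.sum_congr rfl this, Finset.sum_add_distrib, Finset.sum_const,
        nsmul_eq_mul, hcard]
    have hd : 0 ≤ x k - x (k + 1) :=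
      sub_nonneg.mpr (hmono k (k + 1) hk (by omega) le_rfl)
    have hB0 : 0 ≤ B := by
      refine Finset.sum_nonneg fun i hi => ?_
      simp only [Finset.mem_Icc] at hi
      exact sub_nonneg.mpr (hmono' i k hi.1 hi.2 le_rfl)
    have hK : (0 : ℝ) < (k : ℝ) + 1 := by positivity
    have hK2 : (0 : ℝ) < (k : ℝ) + 2 := by positivity
    have hm1 : (1 : ℝ) ≤ (m : ℝ) := by exact_mod_cast hm
    -- combine
    have key : (1 / (((k : ℝ) + 1) * ((k : ℝ) + 2))) * B' + (1 / ((k : ℝ) + 2)) * B'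
        = (1 / ((k : ℝ) + 1)) * B' := by
      field_simp
      ring
    have hle : (1 / ((k : ℝ) + 1)) * B'
        ≤ (1 / ((k : ℝ) + 1)) * B + (x k - x (k + 1)) := by
      rw [eB', mul_add]
      have h1 : (1 / ((k : ℝ) + 1)) * (((k : ℝ) + 1 - (m : ℝ)) * (x k - x (k + 1)))
          ≤ (1 / ((k : ℝ) + 1)) * (((k : ℝ) + 1) * (x k - x (k + 1))) := by
        apply mul_le_mul_of_nonneg_left _ (by positivity)
        apply mul_le_mul_of_nonneg_right _ hd
        linarith
      have h2 : (1 / ((k : ℝ) + 1)) * (((k : ℝ) + 1) * (x k - x (k + 1)))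
          = x k - x (k + 1) := by
        field_simp
      linarith
    linarith [key, hle, IH']

/-- Multi-unit feasibility bound for the B-terms.  Values `w 1 ≥ w 2 ≥ ⋯ ≥ w n > 0`
are indexed by `1,…,n`, and `k = max{ i : w i > w m / 2 }` is specified by the
characterizing hypothesis `hkdef` (together with `hk`). -/
theorem multi_unit_B_terms_bound (n m : ℕ) (hm : 1 ≤ m) (hmn : m ≤ n)
    (w : ℕ → ℝ)
    (hsorted : ∀ i ∈ Finset.Icc 1 n, ∀ j ∈ Finset.Icc 1 n, i ≤ j → w j ≤ w i)
    (hpos : ∀ i ∈ Finset.Icc 1 n, 0 < w i)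
    (k : ℕ) (hk : k ≤ n)
    (hkdef : ∀ i ∈ Finset.Icc 1 n, (w m / 2 < w i ↔ i ≤ k)) :
    ∑ i ∈ Finset.Icc m k, ∑ j ∈ Finset.Icc 1 k,
        ((m : ℝ) / ((j : ℝ) * ((j : ℝ) + 1))) * logdag (w i / w j)
      ≤ (m : ℝ) := by
  have hmIcc : m ∈ Finset.Icc 1 n := Finset.mem_Icc.mpr ⟨hm, hmn⟩
  have hwm : 0 < w m := hpos m hmIcc
  have hmk : m ≤ k := (hkdef m hmIcc).mp (by linarith)
  have hkIcc : k ∈ Finset.Icc 1 n := Finset.mem_Icc.mpr ⟨by omega, hk⟩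
  have hwk : w m / 2 < w k := (hkdef k hkIcc).mpr le_rfl
  set x : ℕ → ℝ := fun i => Real.logb 2 (w i) with hx
  have hmem : ∀ i : ℕ, 1 ≤ i → i ≤ k → i ∈ Finset.Icc 1 n :=
    fun i h1 h2 => Finset.mem_Icc.mpr ⟨h1, le_trans h2 hk⟩
  have hmono : ∀ i j : ℕ, m ≤ i → i ≤ j → j ≤ k → x j ≤ x i := by
    intro i j hi hij hjk
    exact Real.logb_le_logb_of_le one_lt_two
      (hpos j (hmem j (by omega) hjk))
      (hsorted i (hmem i (by omega) (le_trans hij hjk)) j (hmem j (by omega) hjk) hij)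
  -- pointwise bound
  have hpt : ∀ i ∈ Finset.Icc m k, ∀ j ∈ Finset.Icc 1 k,
      ((m : ℝ) / ((j : ℝ) * ((j : ℝ) + 1))) * logdag (w i / w j)
      ≤ (m : ℝ) * ((1 / ((j : ℝ) * ((j : ℝ) + 1))) * (if i < j then x i - x j else 0)) := by
    intro i hi j hj
    simp only [Finset.mem_Icc] at hi hj
    have hwi : 0 < w i := hpos i (hmem i (by omega) hi.2)
    have hwj : 0 < w j := hpos j (hmem j hj.1 hj.2)
    have hjR : (0 : ℝ) < (j : ℝ) * ((j : ℝ) + 1) := by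
      have : (1 : ℝ) ≤ (j : ℝ) := by exact_mod_cast hj.1
      nlinarith
    have hld : logdag (w i / w j) ≤ (if i < j then x i - x j else 0) := ?_
    · calc ((m : ℝ) / ((j : ℝ) * ((j : ℝ) + 1))) * logdag (w i / w j)
          ≤ ((m : ℝ) / ((j : ℝ) * ((j : ℝ) + 1))) * (if i < j then x i - x j else 0) :=
            mul_le_mul_of_nonneg_left hld (by positivity)
        _ = (m : ℝ) * ((1 / ((j : ℝ) * ((j : ℝ) + 1))) * (if i < j then x i - x j else 0)) := by
            ring
    by_cases hij : i < j
    · rw [if_pos hij]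
      have hlogb : Real.logb 2 (w i / w j) = x i - x j :=
        Real.logb_div (ne_of_gt hwi) (ne_of_gt hwj)
      have hge : w j ≤ w i :=
        hsorted i (hmem i (by omega) hi.2) j (hmem j hj.1 hj.2) (le_of_lt hij)
      have hnn : 0 ≤ Real.logb 2 (w i / w j) :=
        Real.logb_nonneg one_lt_two ((one_le_div hwj).mpr hge)
      unfold logdag
      rw [max_eq_right (le_min zero_le_one hnn), ← hlogb]
      exact min_le_right _ _
    · rw [if_neg hij]
      have hle : w i ≤ w j :=
        hsorted j (hmem j hj.1 hj.2) i (hmem i (by omega) hi.2) (by omega)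
      have hnp : Real.logb 2 (w i / w j) ≤ 0 :=
        Real.logb_nonpos one_lt_two (div_pos hwi hwj).le ((div_le_one hwj).mpr hle)
      unfold logdag
      rw [min_eq_right (le_trans hnp zero_le_one), max_eq_left hnp]
  calc ∑ i ∈ Finset.Icc m k, ∑ j ∈ Finset.Icc 1 k,
        ((m : ℝ) / ((j : ℝ) * ((j : ℝ) + 1))) * logdag (w i / w j)
      ≤ ∑ i ∈ Finset.Icc m k, ∑ j ∈ Finset.Icc 1 k,
        (m : ℝ) * ((1 / ((j : ℝ) * ((j : ℝ) + 1))) * (if i < j then x i - x j else 0)) := by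
        exact Finset.sum_le_sum fun i hi => Finset.sum_le_sum fun j hj => hpt i hi j hj
    _ = (m : ℝ) * ∑ i ∈ Finset.Icc m k, ∑ j ∈ Finset.Icc 1 k,
        (1 / ((j : ℝ) * ((j : ℝ) + 1))) * (if i < j then x i - x j else 0) := by
        rw [Finset.mul_sum]
        exact Finset.sum_congr rfl fun i _ => (Finset.mul_sum _ _ _).symm
    _ ≤ (m : ℝ) * 1 := by
        apply mul_le_mul_of_nonneg_left _ (by positivity)
        have haux := multi_unit_aux m hm x k hmk hmono
        have hBnn : 0 ≤ (1 / ((k : ℝ) + 1)) * ∑ i ∈ Finset.Icc m k, (x i - x k) := by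
          apply mul_nonneg (by positivity)
          refine Finset.sum_nonneg fun i hi => ?_
          simp only [Finset.mem_Icc] at hi
          exact sub_nonneg.mpr (hmono i k hi.1 hi.2 le_rfl)
        have hxmk : x m - x k ≤ 1 := by
          have h1 : x m - x k = Real.logb 2 (w m / w k) :=
            (Real.logb_div (ne_of_gt hwm) (ne_of_gt (by linarith : (0:ℝ) < w k))).symm
          have h2 : w m / w k < 2 := by
            rw [div_lt_iff₀ (by linarith : (0:ℝ) < w k)]
            linarith
          rw [h1]
          calc Real.logb 2 (w m / w k) ≤ Real.logb 2 2 :=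
                Real.logb_le_logb_of_le one_lt_two (div_pos hwm (by linarith)) (le_of_lt h2)
            _ = 1 := Real.logb_self_eq_one one_lt_two
        linarith
    _ = (m : ℝ) := mul_one _
end
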